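/- arXiv:2604.15355 — 6 statements merged into one kernel-verified Lean document; each statement's English description precedes it below -/
import Mathlib

section
/- Let M be a self-adjoint operator on a Hilbert space written as a 2×2 block operator matrix with respect to an orthogonal decomposition H = H₁ ⊕ H₂, with blocks M^(11), M^(12), M^(21), M^(22). Suppose M^(11) ≤ m₁·I, M^(22) ≤ m₂·I, and m₁ ≠ m₂. Then the top of the spectrum of M satisfies λ_max(M) ≤ max{m₁, m₂} + ‖M^(12)‖² / |m₂ − m₁|. -/
/-!
Write `a = ‖P₁ x‖`, `b = ‖P₂ x‖`, `c = ‖M^(12)‖`. Splitting `x = P₁ x + P₂ x`, the form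
`re ⟪M x, x⟫` is at most `m₁ a² + m₂ b² + 2 c a b`. If `d = m₂ - m₁ > 0` (the other case is
symmetric), AM-GM gives `2 c a b ≤ d a² + c² b² / d`, which bounds the form by
`(max m₁ m₂ + c² / |m₂ - m₁|) ‖x‖²`. So `M` lies below that multiple of the identity in the
Loewner order, hence so does its spectrum.
-/

open ContinuousLinearMap RCLike

lemma quadratic_form_le_of_lt {m₁ m₂ : ℝ} (h : m₁ < m₂) (a b c : ℝ) :
    m₁ * a ^ 2 + m₂ * b ^ 2 + 2 * (c * a * b) ≤ (m₂ + c ^ 2 / (m₂ - m₁)) * (a ^ 2 + b ^ 2) := by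
  have hd : 0 < m₂ - m₁ := sub_pos.2 h
  have ht : c ^ 2 / (m₂ - m₁) * (m₂ - m₁) = c ^ 2 := div_mul_cancel₀ _ hd.ne'
  have ht₀ : 0 ≤ c ^ 2 / (m₂ - m₁) := by positivity
  nlinarith [sq_nonneg ((m₂ - m₁) * a - c * b), mul_nonneg ht₀ (sq_nonneg a)]

lemma quadratic_form_le {m₁ m₂ : ℝ} (hm : m₁ ≠ m₂) (a b c : ℝ) :
    m₁ * a ^ 2 + m₂ * b ^ 2 + 2 * (c * a * b) ≤
      (max m₁ m₂ + c ^ 2 / |m₂ - m₁|) * (a ^ 2 + b ^ 2) := by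
  rcases hm.lt_or_gt with h | h
  · rw [max_eq_right h.le, abs_of_pos (sub_pos.2 h)]
    exact quadratic_form_le_of_lt h a b c
  · rw [max_eq_left h.le, abs_sub_comm, abs_of_pos (sub_pos.2 h)]
    linarith [quadratic_form_le_of_lt h b a c]

section OrthogonalDecomposition

variable {𝕜 E : Type*} [RCLike 𝕜] [NormedAddCommGroup E] [InnerProductSpace 𝕜 E]
  [CompleteSpace E] {P₁ P₂ : E →L[𝕜] E}

omit [CompleteSpace E] in
lemma apply_add_apply_of_add_eq_one (hsum : P₁ + P₂ = 1) (x : E) : P₁ x + P₂ x = x := by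
  simpa using congr($hsum x)

lemma inner_apply_apply_eq_zero_of_comp_eq_zero (hP₁ : IsSelfAdjoint P₁) (horth : P₁ ∘L P₂ = 0)
    (x y : E) : inner 𝕜 (P₁ x) (P₂ y) = 0 := by
  rw [← adjoint_inner_right, hP₁.adjoint_eq, ← comp_apply, horth, zero_apply, inner_zero_right]

lemma norm_sq_eq_norm_sq_add_norm_sq_of_add_eq_one (hP₁ : IsSelfAdjoint P₁)
    (hsum : P₁ + P₂ = 1) (horth : P₁ ∘L P₂ = 0) (x : E) :
    ‖x‖ ^ 2 = ‖P₁ x‖ ^ 2 + ‖P₂ x‖ ^ 2 := by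
  conv_lhs => rw [← apply_add_apply_of_add_eq_one hsum x]
  simpa only [sq] using norm_add_sq_eq_norm_sq_add_norm_sq_of_inner_eq_zero _ _
    (inner_apply_apply_eq_zero_of_comp_eq_zero hP₁ horth x x)

omit [CompleteSpace E] in
lemma eq_sum_blocks_of_add_eq_one (hsum : P₁ + P₂ = 1) (M : E →L[𝕜] E) :
    M = P₁ ∘L M ∘L P₁ + P₁ ∘L M ∘L P₂ + P₂ ∘L M ∘L P₁ + P₂ ∘L M ∘L P₂ :=
  calc M = (P₁ + P₂) ∘L M ∘L (P₁ + P₂) := by rw [hsum]; rfl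
    _ = _ := by simp only [comp_add, add_comp]; abel

lemma re_inner_apply_self_eq_blocks {M : E →L[𝕜] E} (hM : IsSelfAdjoint M)
    (hP₁ : IsSelfAdjoint P₁) (hP₂ : IsSelfAdjoint P₂) (hsum : P₁ + P₂ = 1) (x : E) :
    re (inner 𝕜 (M x) x) = re (inner 𝕜 ((P₁ ∘L M ∘L P₁) x) x)
      + 2 * re (inner 𝕜 ((P₁ ∘L M ∘L P₂) x) x) + re (inner 𝕜 ((P₂ ∘L M ∘L P₂) x) x) := by
  have hadj : adjoint (P₂ ∘L M ∘L P₁) = P₁ ∘L M ∘L P₂ := by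
    rw [adjoint_comp, adjoint_comp, hP₁.adjoint_eq, hM.adjoint_eq, hP₂.adjoint_eq, comp_assoc]
  have hcross : re (inner 𝕜 ((P₂ ∘L M ∘L P₁) x) x) = re (inner 𝕜 ((P₁ ∘L M ∘L P₂) x) x) := by
    rw [← hadj, adjoint_inner_left, inner_re_symm]
  conv_lhs => rw [eq_sum_blocks_of_add_eq_one hsum M]
  simp only [add_apply, inner_add_left, map_add, hcross]
  ring

lemma norm_inner_apply_self_le (hP₁ : IsSelfAdjoint P₁) {A : E →L[𝕜] E}
    (hA₁ : P₁ ∘L A = A) (hA₂ : A ∘L P₂ = A) (x : E) :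
    ‖inner 𝕜 (A x) x‖ ≤ ‖A‖ * ‖P₁ x‖ * ‖P₂ x‖ := by
  have hx : inner 𝕜 (A x) x = inner 𝕜 (A (P₂ x)) (P₁ x) := by
    conv_lhs => rw [← hA₁, ← hA₂]
    rw [comp_apply, ← adjoint_inner_right, hP₁.adjoint_eq, comp_apply]
  calc ‖inner 𝕜 (A x) x‖ ≤ ‖A (P₂ x)‖ * ‖P₁ x‖ := hx ▸ norm_inner_le_norm _ _
    _ ≤ ‖A‖ * ‖P₂ x‖ * ‖P₁ x‖ := by gcongr; exact A.le_opNorm _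
    _ = ‖A‖ * ‖P₁ x‖ * ‖P₂ x‖ := by ring

end OrthogonalDecomposition

section Spectrum

variable {E : Type*} [NormedAddCommGroup E] [InnerProductSpace ℂ E] [CompleteSpace E]

omit [CompleteSpace E] in
lemma re_inner_algebraMap_apply_self (K : ℝ) (x : E) :
    (inner ℂ (algebraMap ℝ (E →L[ℂ] E) K x) x).re = K * ‖x‖ ^ 2 := by
  rw [Algebra.algebraMap_eq_smul_one, smul_apply, one_apply_eq_self,
    real_smul_eq_coe_smul (K := ℂ), inner_smul_left, inner_self_eq_norm_sq_to_K, conj_ofReal]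
  norm_cast

theorem IsSelfAdjoint.le_algebraMap_of_re_inner_le {M : E →L[ℂ] E} (hM : IsSelfAdjoint M)
    {K : ℝ} (h : ∀ x, (inner ℂ (M x) x).re ≤ K * ‖x‖ ^ 2) :
    M ≤ algebraMap ℝ (E →L[ℂ] E) K := by
  rw [le_def, isPositive_def']
  refine ⟨(IsSelfAdjoint.algebraMap _ (.all K)).sub hM, fun x => ?_⟩
  simp only [reApplyInnerSelf, sub_apply, inner_sub_left, map_sub, re_to_complex,
    re_inner_algebraMap_apply_self]
  linarith [h x]

theorem IsSelfAdjoint.re_le_of_mem_spectrum {M : E →L[ℂ] E} (hM : IsSelfAdjoint M) {K : ℝ}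
    (h : M ≤ algebraMap ℝ (E →L[ℂ] E) K) {μ : ℂ} (hμ : μ ∈ spectrum ℂ M) : μ.re ≤ K := by
  refine (le_algebraMap_iff_spectrum_le hM).1 h μ.re ?_
  rw [← spectrum.algebraMap_mem_iff ℂ, Complex.coe_algebraMap, ← hM.mem_spectrum_eq_re hμ]
  exact hμ

end Spectrum

/-- For a bounded self-adjoint operator `M` on a Hilbert space written as a
2×2 block operator matrix w.r.t. an orthogonal decomposition given by orthogonal projections
`P₁, P₂`, if `M^(11) ≤ m₁`, `M^(22) ≤ m₂` and `m₁ ≠ m₂`, then the top of the spectrum of `M`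
is at most `max m₁ m₂ + ‖M^(12)‖² / |m₂ − m₁|`. -/
theorem stmt_0
    {E : Type*} [NormedAddCommGroup E] [InnerProductSpace ℂ E] [CompleteSpace E]
    (M P₁ P₂ : E →L[ℂ] E)
    (hM : IsSelfAdjoint M)
    (hP₁sa : IsSelfAdjoint P₁) (hP₂sa : IsSelfAdjoint P₂)
    (hP₁idem : P₁ ∘L P₁ = P₁) (hP₂idem : P₂ ∘L P₂ = P₂)
    (hsum : P₁ + P₂ = 1) (horth : P₁ ∘L P₂ = 0)
    (m₁ m₂ : ℝ) (hm : m₁ ≠ m₂)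
    (h11 : ∀ x : E, (inner ℂ ((P₁ ∘L M ∘L P₁) x) x : ℂ).re ≤ m₁ * ‖P₁ x‖ ^ 2)
    (h22 : ∀ x : E, (inner ℂ ((P₂ ∘L M ∘L P₂) x) x : ℂ).re ≤ m₂ * ‖P₂ x‖ ^ 2) :
    ∀ μ ∈ spectrum ℂ M, μ.re ≤ max m₁ m₂ + ‖P₁ ∘L M ∘L P₂‖ ^ 2 / |m₂ - m₁| := by
  intro μ hμ
  set A := P₁ ∘L M ∘L P₂
  have hA₁ : P₁ ∘L A = A := by simp only [A, ← comp_assoc, hP₁idem]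
  have hA₂ : A ∘L P₂ = A := by simp only [A, comp_assoc, hP₂idem]
  refine hM.re_le_of_mem_spectrum (hM.le_algebraMap_of_re_inner_le fun x => ?_) hμ
  have hcross : (inner ℂ (A x) x).re ≤ ‖A‖ * ‖P₁ x‖ * ‖P₂ x‖ :=
    (Complex.re_le_norm _).trans (norm_inner_apply_self_le hP₁sa hA₁ hA₂ x)
  calc (inner ℂ (M x) x).re
      = (inner ℂ ((P₁ ∘L M ∘L P₁) x) x).re + 2 * (inner ℂ (A x) x).re
          + (inner ℂ ((P₂ ∘L M ∘L P₂) x) x).re :=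
        re_inner_apply_self_eq_blocks hM hP₁sa hP₂sa hsum x
    _ ≤ m₁ * ‖P₁ x‖ ^ 2 + m₂ * ‖P₂ x‖ ^ 2 + 2 * (‖A‖ * ‖P₁ x‖ * ‖P₂ x‖) := by
        linarith [h11 x, h22 x]
    _ ≤ (max m₁ m₂ + ‖A‖ ^ 2 / |m₂ - m₁|) * ‖x‖ ^ 2 := by
        rw [norm_sq_eq_norm_sq_add_norm_sq_of_add_eq_one hP₁sa hsum horth x]
        exact quadratic_form_le hm _ _ _
end

section
/- Let M be a self-adjoint operator on H = H₁ ⊕ H₂ with blocks M^(αβ). Assume that for some λ* ∈ ℝ one has M^(11) ≤ m₁·I with m₁ < λ*, and that for every λ > λ* the operator M^(22) − λ − M^(21)(M^(11) − λ)^{-1}M^(12) is invertible with a negative upper bound (i.e., is ≤ −c(λ)·I for some c(λ) > 0). Then M − λ is invertible for every λ > λ*, hence λ_max(M) ≤ λ*. -/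
/-!
Write `q = 1 - P₁` and `x = M - λ`. Since `R` inverts the block `P₁ x P₁` on the range of `P₁`,
`x` has the block LDU factorization `x = (1 + q x P₁ R) (P₁ x P₁ + s) (1 + R P₁ x q)`, where `s` is
the Schur complement; the outer factors are `1` plus a square-zero element, hence invertible. Both
diagonal blocks of the middle factor are uniformly negative (`M⁽¹¹⁾ - λ ≤ m₁ - λ < 0`, and the
assumed bound on `s`), so `-(P₁ x P₁ + s)` is coercive and therefore invertible. Finally, the
spectrum of the self-adjoint `M` is real.
-/

open ContinuousLinearMap

theorem isUnit_one_add_mul_mul_of_mul_eq_zero {α : Type*} [Ring α] {a b c : α} (h : c * a = 0) :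
    IsUnit (1 + a * b * c) :=
  IsNilpotent.isUnit_one_add ⟨2, by
    rw [pow_two, show a * b * c * (a * b * c) = a * b * (c * a) * b * c by noncomm_ring, h]
    simp⟩

theorem mul_sub_algebraMap_mul {𝕜 A : Type*} [CommSemiring 𝕜] [Ring A] [Algebra 𝕜 A]
    (e a f : A) (c : 𝕜) : e * (a - algebraMap 𝕜 A c) * f = e * a * f - c • (e * f) := by
  rw [Algebra.algebraMap_eq_smul_one, mul_sub, sub_mul, mul_smul_one, smul_mul_assoc]

section SchurComplement

variable {α : Type*} [Ring α] {p x r : α}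

theorem isUnit_of_isUnit_add_schurComplement (hp : IsIdempotentElem p) (hr : p * r * p = r)
    (hrx : r * (p * x * p) = p) (hxr : p * x * p * r = p)
    (hS : IsUnit (p * x * p +
      ((1 - p) * x * (1 - p) - (1 - p) * x * p * r * (p * x * (1 - p))))) :
    IsUnit x := by
  set q := 1 - p with hq
  set s := q * x * q - q * x * p * r * (p * x * q) with hs
  have hpq : p * q = 0 := by rw [hq, mul_sub, mul_one, hp.eq, sub_self]
  have hqp : q * p = 0 := by rw [hq, sub_mul, one_mul, hp.eq, sub_self]
  have hrq : r * q = 0 := by rw [← hr, mul_assoc, hpq, mul_zero]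
  have hqr : q * r = 0 := by rw [← hr, ← mul_assoc, ← mul_assoc, hqp, zero_mul, zero_mul]
  have hrs : r * s = 0 := by
    rw [hs, show r * (q * x * q - q * x * p * r * (p * x * q)) =
      r * q * (x * q - x * p * r * (p * x * q)) by noncomm_ring, hrq, zero_mul]
  have hsr : s * r = 0 := by
    rw [hs, show (q * x * q - q * x * p * r * (p * x * q)) * r =
      (q * x - q * x * p * r * p * x) * (q * r) by noncomm_ring, hqr, mul_zero]
  have hL : IsUnit (1 + q * x * p * r) := by
    simpa only [mul_assoc] using isUnit_one_add_mul_mul_of_mul_eq_zero (b := x * p) hrq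
  have hU : IsUnit (1 + r * p * x * q) := by
    simpa only [mul_assoc] using isUnit_one_add_mul_mul_of_mul_eq_zero (b := p * x) hqr
  have hfactor : (1 + q * x * p * r) * (p * x * p + s) * (1 + r * p * x * q) = x := by
    calc _ = (1 + q * x * p * r) * (p * x * p + s + p * x * q) := by
          rw [mul_assoc, show (p * x * p + s) * (1 + r * p * x * q) =
            p * x * p + s + (p * x * p * r) * (p * x * q) + (s * r) * (p * x * q) by noncomm_ring,
            hxr, hsr, zero_mul, add_zero, ← mul_assoc, ← mul_assoc, hp.eq]
      _ = p * x * p + s + p * x * q + q * x * p + q * x * p * r * (p * x * q) := by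
          rw [show (1 + q * x * p * r) * (p * x * p + s + p * x * q) =
            p * x * p + s + p * x * q + q * x * p * (r * (p * x * p)) + q * x * p * (r * s)
              + q * x * p * r * (p * x * q) by noncomm_ring,
            hrx, hrs, mul_zero, add_zero, mul_assoc (q * x), hp.eq]
      _ = x := by rw [hs, hq]; noncomm_ring
  rw [← hfactor]
  exact (hL.mul hS).mul hU

end SchurComplement

namespace IsStarProjection

variable {𝕜 E : Type*} [RCLike 𝕜] [NormedAddCommGroup E] [InnerProductSpace 𝕜 E] [CompleteSpace E]
  {P : E →L[𝕜] E}

open RCLike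

theorem inner_map_left (hP : IsStarProjection P) (x y : E) :
    inner 𝕜 (P x) y = inner 𝕜 x (P y) :=
  hP.isSelfAdjoint.isSymmetric x y

theorem re_inner_apply_self (hP : IsStarProjection P) (x : E) :
    re (inner 𝕜 (P x) x) = ‖P x‖ ^ 2 := by
  have hPP : P (P x) = P x := DFunLike.congr_fun hP.isIdempotentElem.eq x
  rw [← hPP, hP.inner_map_left, hPP, inner_self_eq_norm_sq]

theorem norm_sq_eq_add (hP : IsStarProjection P) (x : E) :
    ‖x‖ ^ 2 = ‖P x‖ ^ 2 + ‖(1 - P) x‖ ^ 2 := by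
  have hP1P : P ((1 - P) x) = 0 := DFunLike.congr_fun hP.mul_one_sub_self x
  have horth : inner 𝕜 (P x) ((1 - P) x) = 0 := by
    rw [hP.inner_map_left, hP1P, inner_zero_right]
  have hx : P x + (1 - P) x = x := by
    rw [sub_apply, one_apply_eq_self, add_sub_cancel]
  simpa only [sq, hx] using norm_add_sq_eq_norm_sq_add_norm_sq_of_inner_eq_zero _ _ horth

theorem re_inner_sub_smul_le {T : E →L[𝕜] E} (hP : IsStarProjection P) {m : ℝ}
    (hT : ∀ x, re (inner 𝕜 (T x) x) ≤ m * ‖P x‖ ^ 2) (l : ℝ) (x : E) :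
    re (inner 𝕜 ((T - (l : 𝕜) • P) x) x) ≤ -(l - m) * ‖P x‖ ^ 2 := by
  rw [sub_apply, smul_apply, inner_sub_left, inner_smul_left, map_sub, conj_ofReal, re_ofReal_mul,
    hP.re_inner_apply_self]
  linarith [hT x]

theorem isUnit_add_of_re_inner_le {T₁ T₂ : E →L[𝕜] E} (hP : IsStarProjection P) {a b : ℝ}
    (ha : 0 < a) (hb : 0 < b) (hT₁ : ∀ x, re (inner 𝕜 (T₁ x) x) ≤ -a * ‖P x‖ ^ 2)
    (hT₂ : ∀ x, re (inner 𝕜 (T₂ x) x) ≤ -b * ‖(1 - P) x‖ ^ 2) : IsUnit (T₁ + T₂) := by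
  refine isUnit_of_forall_le_norm_inner_map _ (c := ⟨min a b, (lt_min ha hb).le⟩) (lt_min ha hb)
    fun x => ?_
  have hre : re (inner 𝕜 ((T₁ + T₂) x) x) ≤ -(min a b) * ‖x‖ ^ 2 := by
    rw [add_apply, inner_add_left, map_add, hP.norm_sq_eq_add x]
    nlinarith [hT₁ x, hT₂ x, min_le_left a b, min_le_right a b, sq_nonneg ‖P x‖,
      sq_nonneg ‖(1 - P) x‖]
  calc ‖x‖ ^ 2 * min a b ≤ -re (inner 𝕜 ((T₁ + T₂) x) x) := by linarith
    _ ≤ ‖inner 𝕜 ((T₁ + T₂) x) x‖ := (neg_le_abs _).trans (abs_re_le_norm _)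

end IsStarProjection

theorem stmt_1_general
    {E : Type*} [NormedAddCommGroup E] [InnerProductSpace ℂ E] [CompleteSpace E]
    (M P₁ P₂ : E →L[ℂ] E)
    (hM : IsSelfAdjoint M)
    (hP₁sa : IsSelfAdjoint P₁)
    (hP₁idem : P₁ ∘L P₁ = P₁)
    (hsum : P₁ + P₂ = 1)
    (lamStar m₁ : ℝ) (hm₁ : m₁ < lamStar)
    (h11 : ∀ x : E, (inner ℂ ((P₁ ∘L M ∘L P₁) x) x : ℂ).re ≤ m₁ * ‖P₁ x‖ ^ 2)
    (hschur : ∀ l : ℝ, lamStar < l →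
      ∃ R : E →L[ℂ] E,
        P₁ ∘L R ∘L P₁ = R ∧
        R ∘L (P₁ ∘L M ∘L P₁ - (l : ℂ) • P₁) = P₁ ∧
        (P₁ ∘L M ∘L P₁ - (l : ℂ) • P₁) ∘L R = P₁ ∧
        ∃ c : ℝ, 0 < c ∧ ∀ x : E,
          (inner ℂ ((P₂ ∘L M ∘L P₂ - (l : ℂ) • P₂
              - (P₂ ∘L M ∘L P₁) ∘L R ∘L (P₁ ∘L M ∘L P₂)) x) x : ℂ).re
            ≤ -c * ‖P₂ x‖ ^ 2) :
    (∀ l : ℝ, lamStar < l → (l : ℂ) ∉ spectrum ℂ M) ∧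
    (∀ μ ∈ spectrum ℂ M, μ.re ≤ lamStar) := by
  have hP : IsStarProjection P₁ := ⟨hP₁idem, hP₁sa⟩
  obtain rfl : P₂ = 1 - P₁ := eq_sub_of_add_eq' hsum
  have hunit (l : ℝ) (hl : lamStar < l) : IsUnit (M - algebraMap ℂ _ (l : ℂ)) := by
    obtain ⟨R, hRP, hRA, hAR, c, hc, hS⟩ := hschur l hl
    set x := M - algebraMap ℂ _ (l : ℂ)
    have hpxp : P₁ * x * P₁ = P₁ * M * P₁ - (l : ℂ) • P₁ := by
      rw [mul_sub_algebraMap_mul, hP.isIdempotentElem.eq]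
    have hqxq : (1 - P₁) * x * (1 - P₁) = (1 - P₁) * M * (1 - P₁) - (l : ℂ) • (1 - P₁) := by
      rw [mul_sub_algebraMap_mul, hP.one_sub.isIdempotentElem.eq]
    have hpxq : P₁ * x * (1 - P₁) = P₁ * M * (1 - P₁) := by
      rw [mul_sub_algebraMap_mul, hP.mul_one_sub_self, smul_zero, sub_zero]
    have hqxp : (1 - P₁) * x * P₁ = (1 - P₁) * M * P₁ := by
      rw [mul_sub_algebraMap_mul, hP.one_sub_mul_self, smul_zero, sub_zero]
    refine isUnit_of_isUnit_add_schurComplement hP.isIdempotentElem hRP (hpxp ▸ hRA) (hpxp ▸ hAR) ?_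
    rw [hpxp, hqxq, hpxq, hqxp]
    exact hP.isUnit_add_of_re_inner_le (sub_pos.2 (hm₁.trans hl)) hc
      (hP.re_inner_sub_smul_le h11 l) hS
  have hnotMem (l : ℝ) (hl : lamStar < l) : (l : ℂ) ∉ spectrum ℂ M := by
    rw [spectrum.notMem_iff, ← IsUnit.neg_iff, neg_sub]
    exact hunit l hl
  refine ⟨hnotMem, fun μ hμ => ?_⟩
  by_contra! hlt
  exact hnotMem μ.re hlt (hM.mem_spectrum_eq_re hμ ▸ hμ)

/-- Schur complement criterion, Proposition 3.2 of the paper: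
for a bounded self-adjoint block operator `M` on `H = H₁ ⊕ H₂`, if `M^(11) ≤ m₁ < λ*` and for
every `λ > λ*` the Schur complement `M^(22) − λ − M^(21)(M^(11) − λ)⁻¹ M^(12)` has a negative
upper bound, then `M − λ` is invertible for every `λ > λ*`; hence `λ_max(M) ≤ λ*`. -/
theorem stmt_1
    {E : Type*} [NormedAddCommGroup E] [InnerProductSpace ℂ E] [CompleteSpace E]
    (M P₁ P₂ : E →L[ℂ] E)
    (hM : IsSelfAdjoint M)
    (hP₁sa : IsSelfAdjoint P₁) (hP₂sa : IsSelfAdjoint P₂)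
    (hP₁idem : P₁ ∘L P₁ = P₁) (hP₂idem : P₂ ∘L P₂ = P₂)
    (hsum : P₁ + P₂ = 1) (horth : P₁ ∘L P₂ = 0)
    (lamStar m₁ : ℝ) (hm₁ : m₁ < lamStar)
    (h11 : ∀ x : E, (inner ℂ ((P₁ ∘L M ∘L P₁) x) x : ℂ).re ≤ m₁ * ‖P₁ x‖ ^ 2)
    (hschur : ∀ l : ℝ, lamStar < l →
      ∃ R : E →L[ℂ] E,
        P₁ ∘L R ∘L P₁ = R ∧
        R ∘L (P₁ ∘L M ∘L P₁ - (l : ℂ) • P₁) = P₁ ∧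
        (P₁ ∘L M ∘L P₁ - (l : ℂ) • P₁) ∘L R = P₁ ∧
        ∃ c : ℝ, 0 < c ∧ ∀ x : E,
          (inner ℂ ((P₂ ∘L M ∘L P₂ - (l : ℂ) • P₂
              - (P₂ ∘L M ∘L P₁) ∘L R ∘L (P₁ ∘L M ∘L P₂)) x) x : ℂ).re
            ≤ -c * ‖P₂ x‖ ^ 2) :
    (∀ l : ℝ, lamStar < l → (l : ℂ) ∉ spectrum ℂ M) ∧
    (∀ μ ∈ spectrum ℂ M, μ.re ≤ lamStar) :=
  stmt_1_general M P₁ P₂ hM hP₁sa hP₁idem hsum lamStar m₁ hm₁ h11 hschur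
end

section
/- Let M be a bounded self-adjoint operator on a Hilbert space, with an orthogonal decomposition into finitely or countably many subspaces with projections P_k, and suppose M_{jk} := P_j M P_k = 0 whenever |j − k| > p₀. Let D = diag{M_{kk}} restricted to indices N₀ < k ≤ N₁, suppose D ≤ −C₁ < 0 on that range and ‖M^(11) − D‖ ≤ qC₁/2 with 0 < q < 1, where M^(11) is the block of M on indices N₀ < k ≤ N₁. Then for every z > −C₁/2 the resolvent (M^(11) − z)^{-1} exists and its blocks satisfy ‖((M^(11) − z)^{-1})_{jk}‖ ≤ 2(C₁(1 − q))^{-1} q^{|j−k|/p₀}. -/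
/-!
Shift the block diagonal to `D' = D - C₁ (1 - Q) - z`: on the range of `Q` nothing changes,
and on all of `E` the real part of the numerical range of `D'` lies below `-(C₁ + z) < -C₁/2`,
so `D'` is invertible with `‖D'⁻¹‖ ≤ 2/C₁` and commutes with every `P k`. Then
`M^(11) - C₁ (1 - Q) - z = D' (1 - B)` with `B = -D'⁻¹ (M^(11) - D)`, `‖B‖ ≤ q`, and `B` is
banded of width `p₀`, so `Bˢ` is banded of width `s p₀`. Truncating the Neumann series of
`(1 - B)⁻¹` after `⌈|j - k|/p₀⌉` terms, the block `P j (1 - B)⁻¹ P k` only sees the tail, of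
norm at most `q^⌈|j - k|/p₀⌉ / (1 - q)`. Compressing the inverse by `Q` gives the resolvent.
-/

open ContinuousLinearMap

theorem OrthogonalIdempotents.commute {R ι : Type*} [Semiring R] {e : ι → R}
    (he : OrthogonalIdempotents e) (i j : ι) : Commute (e i) (e j) := by
  classical
  rw [Commute, SemiconjBy, he.mul_eq, he.mul_eq]
  split_ifs with h h' <;> simp_all

theorem OrthogonalIdempotents.commute_mul_mul {R ι : Type*} [Semiring R] {e : ι → R}
    (he : OrthogonalIdempotents e) (T : R) (i j : ι) : Commute (e i * T * e i) (e j) := by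
  classical
  rw [Commute, SemiconjBy, mul_assoc, he.mul_eq, ← mul_assoc, ← mul_assoc, he.mul_eq]
  split_ifs with h h' <;> simp_all

theorem IsIdempotentElem.units_inv_compression {M : Type*} [Monoid M] {e x : M}
    (he : IsIdempotentElem e) (u : Mˣ) (hu : Commute e u) (hx : e * u = x) :
    e * (e * ↑u⁻¹ * e * e) = e * ↑u⁻¹ * e ∧ e * ↑u⁻¹ * e * x = e ∧ x * (e * ↑u⁻¹ * e) = e := by
  have hr : e * ↑u⁻¹ * e = ↑u⁻¹ * e := by rw [hu.units_inv_right.eq, mul_assoc, he.eq]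
  subst hx
  refine ⟨?_, ?_, ?_⟩
  · rw [hr, mul_assoc (↑u⁻¹ : M) e e, he.eq, ← mul_assoc, hr]
  · rw [hr, mul_assoc, ← mul_assoc e, he.eq, hu.eq, ← mul_assoc, Units.inv_mul, one_mul]
  · rw [hr, mul_assoc, ← mul_assoc (↑u : M), Units.mul_inv, one_mul, he.eq]

theorem IsStarProjection.norm_mul_mul_le {A : Type*} [NormedRing A] [StarRing A] [CStarRing A]
    {p : A} (hp : IsStarProjection p) (x : A) : ‖p * x * p‖ ≤ ‖x‖ :=
  calc ‖p * x * p‖ ≤ ‖p‖ * ‖x‖ * ‖p‖ := norm_mul₃_le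
    _ ≤ 1 * ‖x‖ * 1 := by gcongr <;> exact hp.norm_le
    _ = ‖x‖ := by ring

section Banded

variable {R : Type*} [Ring R]

def IsBanded (P : ℕ → R) (w : ℕ) (T : R) : Prop :=
  ∀ m n : ℕ, (w : ℤ) < |(m : ℤ) - n| → P m * T * P n = 0

variable {P : ℕ → R} {w : ℕ} {S T : R}

theorem isBanded_of_commute (hP : Pairwise fun i j => P i * P j = 0)
    (hT : ∀ m, Commute T (P m)) : IsBanded P w T := fun m n h => by
  have hmn : m ≠ n := by rintro rfl; exact absurd h (by simp)
  rw [← (hT m).eq, mul_assoc, hP hmn, mul_zero]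

theorem IsBanded.neg (hT : IsBanded P w T) : IsBanded P w (-T) := fun m n h => by
  rw [mul_neg, neg_mul, hT m n h, neg_zero]

theorem IsBanded.sub (hS : IsBanded P w S) (hT : IsBanded P w T) : IsBanded P w (S - T) :=
  fun m n h => by rw [mul_sub, sub_mul, hS m n h, hT m n h, sub_zero]

theorem IsBanded.commute_mul (hS : ∀ m, Commute S (P m)) (hT : IsBanded P w T) :
    IsBanded P w (S * T) := fun m n h => by
  rw [← mul_assoc, ← (hS m).eq, mul_assoc S, mul_assoc S, hT m n h, mul_zero]

theorem IsBanded.mul_commute (hS : ∀ m, Commute S (P m)) (hT : IsBanded P w T) :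
    IsBanded P w (T * S) := fun m n h => by
  rw [← mul_assoc, mul_assoc (P m * T), (hS n).eq, ← mul_assoc, hT m n h, zero_mul]

end Banded

section BandedOperator

variable {𝕜 E : Type*} [NontriviallyNormedField 𝕜] [NormedAddCommGroup E] [NormedSpace 𝕜 E]
  {P : ℕ → E →L[𝕜] E}

theorem IsBanded.mul (hPsum : ∀ x, HasSum (fun k => P k x) x) {v w : ℕ} {S T : E →L[𝕜] E}
    (hS : IsBanded P v S) (hT : IsBanded P w T) : IsBanded P (v + w) (S * T) := by
  intro m n h
  ext x
  have hterm : ∀ i, (P m * S) (P i (T (P n x))) = 0 := fun i => by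
    rcases le_or_gt |(m : ℤ) - i| v with hmi | hmi
    · have hin : (w : ℤ) < |(i : ℤ) - n| := by
        have := abs_sub_le (m : ℤ) i n
        push_cast at h
        linarith
      simpa using congrArg (fun A => (P m * S) (A x)) (hT i n hin)
    · simpa using congrArg (· (T (P n x))) (hS m i hmi)
  -- insert the resolution of the identity `∑ i, P i` between `S` and `T`
  have := (hPsum (T (P n x))).mapL (P m * S)
  simp only [hterm] at this
  simpa using this.unique hasSum_zero

theorem IsBanded.pow (hP : Pairwise fun i j => P i * P j = 0)
    (hPsum : ∀ x, HasSum (fun k => P k x) x) {w : ℕ} {T : E →L[𝕜] E} (hT : IsBanded P w T) :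
    ∀ s : ℕ, IsBanded P (s * w) (T ^ s)
  | 0 => by simpa using isBanded_of_commute hP fun m => Commute.one_left (P m)
  | s + 1 => by
    rw [pow_succ, add_one_mul]
    exact (hT.pow hP hPsum s).mul hPsum hT

theorem norm_mul_pow_le {R : Type*} [NormedRing R] (a b : R) :
    ∀ n : ℕ, ‖a * b ^ n‖ ≤ ‖a‖ * ‖b‖ ^ n
  | 0 => by simp
  | n + 1 => by
    rw [pow_succ, ← mul_assoc, pow_succ, ← mul_assoc]
    exact (norm_mul_le _ _).trans (by gcongr; exact norm_mul_pow_le a b n)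

variable [CompleteSpace E]

theorem norm_mul_inverse_one_sub_mul_le {p p' b : E →L[𝕜] E} {q : ℝ} {n : ℕ}
    (hp : ‖p‖ ≤ 1) (hp' : ‖p'‖ ≤ 1) (hbq : ‖b‖ ≤ q) (hq : q < 1)
    (hvanish : ∀ s < n, p * b ^ s * p' = 0) :
    ‖p * Ring.inverse (1 - b) * p'‖ ≤ (1 - q)⁻¹ * q ^ n := by
  have hb : ‖b‖ < 1 := hbq.trans_lt hq
  have htrunc : p * Ring.inverse (1 - b) * p' = p * b ^ n * Ring.inverse (1 - b) * p' := by
    nth_rewrite 1 [NormedRing.inverse_one_sub_nth_order' n hb]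
    rw [mul_add, add_mul, Finset.mul_sum, Finset.sum_mul,
      Finset.sum_eq_zero fun s hs => hvanish s (Finset.mem_range.1 hs), zero_add, ← mul_assoc]
  have hinv : ‖Ring.inverse (1 - b)‖ ≤ (1 - q)⁻¹ := by
    rw [← geom_series_eq_inverse b hb]
    refine (tsum_geometric_le_of_norm_lt_one b hb).trans ?_
    have : ‖(1 : E →L[𝕜] E)‖ ≤ 1 := norm_id_le
    have : (1 - ‖b‖)⁻¹ ≤ (1 - q)⁻¹ := by gcongr
    linarith
  have hq0 : 0 ≤ q := (norm_nonneg b).trans hbq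
  rw [htrunc]
  calc ‖p * b ^ n * Ring.inverse (1 - b) * p'‖
      ≤ ‖p * b ^ n‖ * ‖Ring.inverse (1 - b)‖ * ‖p'‖ := norm_mul₃_le
    _ ≤ (1 * q ^ n) * (1 - q)⁻¹ * 1 := by
      gcongr
      exact (norm_mul_pow_le p b n).trans (by gcongr)
    _ = (1 - q)⁻¹ * q ^ n := by ring

end BandedOperator

section BandedPerturbation

variable {𝕜 E : Type*} [NontriviallyNormedField 𝕜] [NormedAddCommGroup E] [NormedSpace 𝕜 E]
  [CompleteSpace E] {P : ℕ → E →L[𝕜] E}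

theorem IsBanded.norm_mul_inverse_one_sub_mul_le (hP : Pairwise fun i j => P i * P j = 0)
    (hPsum : ∀ x, HasSum (fun k => P k x) x) (hP1 : ∀ m, ‖P m‖ ≤ 1) {w : ℕ}
    {b : E →L[𝕜] E} (hb : IsBanded P w b) {q : ℝ} (hbq : ‖b‖ ≤ q) (hq : q < 1) (j k : ℕ) :
    ‖P j * Ring.inverse (1 - b) * P k‖
      ≤ (1 - q)⁻¹ * q ^ (((|(j : ℤ) - (k : ℤ)| : ℤ) : ℝ) / (w : ℝ)) := by
  set d : ℝ := ((|(j : ℤ) - (k : ℤ)| : ℤ) : ℝ)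
  have hq0 : 0 ≤ q := (norm_nonneg b).trans hbq
  refine (_root_.norm_mul_inverse_one_sub_mul_le (n := ⌈d / w⌉₊) (hP1 j) (hP1 k) hbq hq
    fun s hs => hb.pow hP hPsum s j k ?_).trans ?_
  · have hs : (s : ℝ) < d / w := Nat.lt_ceil.1 hs
    rcases Nat.eq_zero_or_pos w with rfl | hw
    · exact absurd hs (by simp) -- `d / 0 = 0` in `ℝ`
    · have : (((s * w : ℕ) : ℤ) : ℝ) < d := by
        push_cast
        exact (lt_div_iff₀ (by positivity)).1 hs
      exact Int.cast_lt.1 this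
  · gcongr
    rw [← Real.rpow_natCast]
    exact Real.rpow_le_rpow_of_exponent_ge' hq0 hq.le (by positivity) (Nat.le_ceil _)

theorem IsBanded.isUnit_add_and_norm_mul_inverse_mul_le (hP : Pairwise fun i j => P i * P j = 0)
    (hPsum : ∀ x, HasSum (fun k => P k x) x) (hP1 : ∀ m, ‖P m‖ ≤ 1)
    (u : (E →L[𝕜] E)ˣ) (hu : ∀ m, Commute (u : E →L[𝕜] E) (P m)) {K q : ℝ}
    (huK : ‖(↑u⁻¹ : E →L[𝕜] E)‖ ≤ K) {w : ℕ} {V : E →L[𝕜] E} (hV : IsBanded P w V)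
    (hVq : K * ‖V‖ ≤ q) (hq : q < 1) :
    IsUnit (↑u + V) ∧ ∀ j k : ℕ, ‖P j * Ring.inverse (↑u + V) * P k‖
      ≤ K / (1 - q) * q ^ (((|(j : ℤ) - (k : ℤ)| : ℤ) : ℝ) / (w : ℝ)) := by
  have hu' : ∀ m, Commute (↑u⁻¹ : E →L[𝕜] E) (P m) := fun m => (hu m).units_inv_left
  set b := -(↑u⁻¹ * V)
  have hfac : ↑u + V = ↑u * (1 - b) := by simp [b, mul_add]
  have hbq : ‖b‖ ≤ q := by
    rw [norm_neg]
    exact (norm_mul_le _ _).trans ((mul_le_mul_of_nonneg_right huK (norm_nonneg _)).trans hVq)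
  have hbanded : IsBanded P w b := (hV.commute_mul hu').neg
  set v := Units.oneSub b (hbq.trans_lt hq)
  have hinv : Ring.inverse (↑u + V) = Ring.inverse (1 - b) * ↑u⁻¹ := by
    rw [hfac, ← Units.val_oneSub b (hbq.trans_lt hq), ← Units.val_mul, Ring.inverse_unit,
      Ring.inverse_unit, mul_inv_rev, Units.val_mul]
  refine ⟨hfac ▸ u.isUnit.mul v.isUnit, fun j k => ?_⟩
  have hK : 0 ≤ K := (norm_nonneg _).trans huK
  calc ‖P j * Ring.inverse (↑u + V) * P k‖ = ‖P j * Ring.inverse (1 - b) * P k * ↑u⁻¹‖ := by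
        rw [hinv]
        simp only [mul_assoc, (hu' k).eq]
    _ ≤ ‖P j * Ring.inverse (1 - b) * P k‖ * K :=
        (norm_mul_le _ _).trans (mul_le_mul_of_nonneg_left huK (norm_nonneg _))
    _ ≤ (1 - q)⁻¹ * q ^ (((|(j : ℤ) - (k : ℤ)| : ℤ) : ℝ) / (w : ℝ)) * K := by
        gcongr
        exact hbanded.norm_mul_inverse_one_sub_mul_le hP hPsum hP1 hbq hq j k
    _ = K / (1 - q) * q ^ (((|(j : ℤ) - (k : ℤ)| : ℤ) : ℝ) / (w : ℝ)) := by ring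

end BandedPerturbation

section Hilbert

variable {𝕜 E : Type*} [RCLike 𝕜] [NormedAddCommGroup E] [InnerProductSpace 𝕜 E]
  [CompleteSpace E]

open RCLike

theorem IsStarProjection.re_inner_apply_self_s2 {p : E →L[𝕜] E} (hp : IsStarProjection p) (x : E) :
    re (inner 𝕜 (p x) x) = ‖p x‖ ^ 2 := by
  have hpp : p (p x) = p x := congr($(hp.isIdempotentElem.eq) x)
  conv_lhs => rw [← hpp]
  rw [show inner 𝕜 (p (p x)) x = inner 𝕜 (p x) (p x) from hp.isSelfAdjoint.isSymmetric (p x) x,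
    inner_self_eq_norm_sq]

theorem exists_units_norm_inv_le_of_re_inner_le {T : E →L[𝕜] E} {c : ℝ} (hc : 0 < c)
    (hT : ∀ x, re (inner 𝕜 (T x) x) ≤ -c * ‖x‖ ^ 2) :
    ∃ u : (E →L[𝕜] E)ˣ, ↑u = T ∧ ‖(↑u⁻¹ : E →L[𝕜] E)‖ ≤ c⁻¹ := by
  lift c to NNReal using hc.le
  have hbound : ∀ x, ‖x‖ ^ 2 * c ≤ ‖inner 𝕜 (T x) x‖ := fun x => by
    have := neg_le_abs (re (inner 𝕜 (T x) x))
    have := abs_re_le_norm (inner 𝕜 (T x) x)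
    linarith [hT x]
  obtain ⟨u, rfl⟩ := isUnit_of_forall_le_norm_inner_map T (by exact_mod_cast hc) hbound
  refine ⟨u, rfl, opNorm_le_bound _ (by positivity) fun y => ?_⟩
  simpa [← mul_apply_eq_comp] using
    (antilipschitz_of_forall_le_inner_map (u : E →L[𝕜] E) (by exact_mod_cast hc) hbound).le_mul_norm
      (map_zero _) ((↑u⁻¹ : E →L[𝕜] E) y)

theorem re_inner_sub_smul_one_sub_sub_smul_le {D Q : E →L[𝕜] E} (hQ : IsStarProjection Q)
    {C : ℝ} (hD : ∀ x, re (inner 𝕜 (D x) x) ≤ -C * ‖Q x‖ ^ 2) (z : ℝ) (x : E) :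
    re (inner 𝕜 ((D - (C : 𝕜) • (1 - Q) - (z : 𝕜) • 1) x) x) ≤ -(C + z) * ‖x‖ ^ 2 := by
  have hsplit : ‖x‖ ^ 2 = ‖Q x‖ ^ 2 + ‖(1 - Q) x‖ ^ 2 := by
    rw [← hQ.re_inner_apply_self_s2, ← hQ.one_sub.re_inner_apply_self_s2, ← map_add, ← inner_add_left,
      sub_apply, one_apply_eq_self, add_sub_cancel, inner_self_eq_norm_sq]
  rw [sub_apply, sub_apply, smul_apply, smul_apply, inner_sub_left, inner_sub_left,
    inner_smul_left, inner_smul_left, map_sub, map_sub, conj_ofReal, conj_ofReal, re_ofReal_mul,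
    re_ofReal_mul, hQ.one_sub.re_inner_apply_self_s2, one_apply_eq_self, inner_self_eq_norm_sq, hsplit]
  linarith [hD x]

theorem re_inner_sum_apply_le {ι : Type*} {s : Finset ι} {T P : ι → E →L[𝕜] E}
    (hP : ∀ i, IsStarProjection (P i)) (hsum : IsStarProjection (∑ i ∈ s, P i)) {C : ℝ}
    (hT : ∀ i ∈ s, ∀ x, re (inner 𝕜 (T i x) x) ≤ -C * ‖P i x‖ ^ 2) (x : E) :
    re (inner 𝕜 ((∑ i ∈ s, T i) x) x) ≤ -C * ‖(∑ i ∈ s, P i) x‖ ^ 2 := by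
  rw [← hsum.re_inner_apply_self_s2]
  simp only [sum_apply, sum_inner, map_sum, Finset.mul_sum]
  exact Finset.sum_le_sum fun i hi => (hT i hi x).trans_eq (by rw [(hP i).re_inner_apply_self_s2])

end Hilbert

section Compression

variable {𝕜 E : Type*} [RCLike 𝕜] [NormedAddCommGroup E] [InnerProductSpace 𝕜 E]
  [CompleteSpace E]

open RCLike

theorem exists_compression_inverse_and_norm_block_le {P : ℕ → E →L[𝕜] E}
    (hP : ∀ m, IsStarProjection (P m)) (hPorth : Pairwise fun i j => P i * P j = 0)
    (hPsum : ∀ x, HasSum (fun k => P k x) x) {Q D M : E →L[𝕜] E} (hQ : IsStarProjection Q)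
    (hQP : ∀ m, Commute Q (P m)) (hDP : ∀ m, Commute D (P m)) {C q : ℝ} (hC : 0 < C)
    (hq : q < 1) (hD : ∀ x, re (inner 𝕜 (D x) x) ≤ -C * ‖Q x‖ ^ 2) (hQM : Q * M = M)
    (hMQ : M * Q = M) {w : ℕ} (hMD : IsBanded P w (M - D)) (hMDq : ‖M - D‖ ≤ q * C / 2)
    {z : ℝ} (hz : -C / 2 < z) :
    ∃ R : E →L[𝕜] E, Q * (R * Q) = R ∧ R * (M - (z : 𝕜) • Q) = Q ∧ (M - (z : 𝕜) • Q) * R = Q ∧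
      ∀ j k : ℕ, ‖P j * R * P k‖
        ≤ 2 / (C * (1 - q)) * q ^ (((|(j : ℤ) - (k : ℤ)| : ℤ) : ℝ) / (w : ℝ)) := by
  obtain ⟨u, hu, huK⟩ := exists_units_norm_inv_le_of_re_inner_le (c := C + z) (by linarith)
    (re_inner_sub_smul_one_sub_sub_smul_le hQ hD z)
  have huP : ∀ m, Commute (u : E →L[𝕜] E) (P m) := fun m => by
    rw [hu]
    exact ((hDP m).sub_left (((Commute.one_left _).sub_left (hQP m)).smul_left _)).sub_left
      ((Commute.one_left _).smul_left _)
  have huK' : ‖(↑u⁻¹ : E →L[𝕜] E)‖ ≤ 2 / C :=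
    huK.trans (by rw [← inv_div]; exact inv_anti₀ (by positivity) (by linarith))
  have hMDq' : 2 / C * ‖M - D‖ ≤ q := by
    calc 2 / C * ‖M - D‖ ≤ 2 / C * (q * C / 2) := by gcongr
      _ = q := by field_simp
  obtain ⟨⟨a, ha⟩, hdecay⟩ := hMD.isUnit_add_and_norm_mul_inverse_mul_le hPorth hPsum
    (fun m => (hP m).norm_le) u huP huK' hMDq' hq
  have ha' : (a : E →L[𝕜] E) = M - (C : 𝕜) • (1 - Q) - (z : 𝕜) • 1 := by
    rw [ha, hu]
    module
  have hQa : Q * a = M - (z : 𝕜) • Q := by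
    simp [ha', mul_sub, hQ.isIdempotentElem.eq, hQM]
  have haQ : a * Q = M - (z : 𝕜) • Q := by
    simp [ha', sub_mul, hQ.isIdempotentElem.eq, hMQ]
  obtain ⟨h1, h2, h3⟩ := hQ.isIdempotentElem.units_inv_compression a (hQa.trans haQ.symm) hQa
  refine ⟨Q * (↑a⁻¹ : E →L[𝕜] E) * Q, h1, h2, h3, fun j k => ?_⟩
  calc ‖P j * (Q * ↑a⁻¹ * Q) * P k‖ = ‖Q * (P j * Ring.inverse (↑u + (M - D)) * P k) * Q‖ := by
        rw [← ha, Ring.inverse_unit]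
        simp only [mul_assoc, (hQP k).eq]
        rw [← mul_assoc (P j), ← (hQP j).eq, mul_assoc]
    _ ≤ ‖P j * Ring.inverse (↑u + (M - D)) * P k‖ := hQ.norm_mul_mul_le _
    _ ≤ 2 / (C * (1 - q)) * q ^ (((|(j : ℤ) - (k : ℤ)| : ℤ) : ℝ) / (w : ℝ)) := by
        rw [← div_div]
        exact hdecay j k

end Compression

theorem stmt_2_general
    {E : Type*} [NormedAddCommGroup E] [InnerProductSpace ℂ E] [CompleteSpace E]
    (M : E →L[ℂ] E)
    (P : ℕ → E →L[ℂ] E)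
    (hPsa : ∀ k, IsSelfAdjoint (P k)) (hPidem : ∀ k, P k ∘L P k = P k)
    (hPorth : ∀ j k, j ≠ k → P j ∘L P k = 0)
    (hPsum : ∀ x : E, HasSum (fun k => P k x) x)
    (p₀ N₀ N₁ : ℕ)
    (hband : ∀ j k : ℕ, (p₀ : ℤ) < |(j : ℤ) - (k : ℤ)| → P j ∘L M ∘L P k = 0)
    (C₁ q : ℝ) (hC₁ : 0 < C₁) (hq1 : q < 1)
    (Q M11 D : E →L[ℂ] E)
    (hQ : Q = ∑ k ∈ Finset.Ioc N₀ N₁, P k)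
    (hM11 : M11 = Q ∘L M ∘L Q)
    (hD : D = ∑ k ∈ Finset.Ioc N₀ N₁, P k ∘L M ∘L P k)
    (hDneg : ∀ k ∈ Finset.Ioc N₀ N₁, ∀ x : E,
      (inner ℂ ((P k ∘L M ∘L P k) x) x : ℂ).re ≤ -C₁ * ‖P k x‖ ^ 2)
    (hclose : ‖M11 - D‖ ≤ q * C₁ / 2) :
    ∀ z : ℝ, -C₁ / 2 < z →
      ∃ R : E →L[ℂ] E,
        Q ∘L R ∘L Q = R ∧
        R ∘L (M11 - (z : ℂ) • Q) = Q ∧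
        (M11 - (z : ℂ) • Q) ∘L R = Q ∧
        ∀ j ∈ Finset.Ioc N₀ N₁, ∀ k ∈ Finset.Ioc N₀ N₁,
          ‖P j ∘L R ∘L P k‖
            ≤ 2 / (C₁ * (1 - q)) * q ^ (((|(j : ℤ) - (k : ℤ)| : ℤ) : ℝ) / (p₀ : ℝ)) := by
  intro z hz
  have hP : OrthogonalIdempotents P := ⟨hPidem, fun j k h => hPorth j k h⟩
  have hPproj : ∀ k, IsStarProjection (P k) := fun k => ⟨hPidem k, hPsa k⟩
  have hQproj : IsStarProjection Q :=
    hQ ▸ ⟨hP.isIdempotentElem_sum, isSelfAdjoint_sum _ fun k _ => hPsa k⟩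
  have hQP : ∀ m, Commute Q (P m) := fun m =>
    hQ ▸ Commute.sum_left _ _ _ fun k _ => hP.commute k m
  have hDP : ∀ m, Commute D (P m) := fun m =>
    hD ▸ Commute.sum_left _ _ _ fun k _ => hP.commute_mul_mul M k m
  have hDQ : ∀ x, RCLike.re (inner ℂ (D x) x) ≤ -C₁ * ‖Q x‖ ^ 2 := by
    rw [hQ, hD]
    exact re_inner_sum_apply_le hPproj (hQ ▸ hQproj) hDneg
  have hQM11 : Q * M11 = M11 := by
    rw [hM11]
    change Q * (Q * (M * Q)) = Q * (M * Q)
    rw [← mul_assoc, hQproj.isIdempotentElem.eq]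
  have hM11Q : M11 * Q = M11 := by
    rw [hM11]
    change Q * (M * Q) * Q = Q * (M * Q)
    rw [mul_assoc, mul_assoc, hQproj.isIdempotentElem.eq]
  have hV : IsBanded P p₀ (M11 - D) := by
    have hMband : IsBanded P p₀ M := fun j k h => by rw [mul_assoc]; exact hband j k h
    rw [hM11]
    exact ((hMband.mul_commute hQP).commute_mul hQP).sub (isBanded_of_commute hP.ortho hDP)
  obtain ⟨R, h1, h2, h3, hR⟩ := exists_compression_inverse_and_norm_block_le hPproj hP.ortho
    hPsum hQproj hQP hDP hC₁ hq1 hDQ hQM11 hM11Q hV hclose hz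
  exact ⟨R, h1, h2, h3, fun j _ k _ => hR j k⟩

/-- off-diagonal resolvent decay for a banded block operator, step (3.6) of
Proposition 3.1: if `M` is self-adjoint and banded of width `p₀` with respect to a countable
orthogonal block decomposition, `D` is the block diagonal of `M^(11)` (the block of `M` on
indices `N₀ < k ≤ N₁`) with `D ≤ −C₁ < 0` and `‖M^(11) − D‖ ≤ qC₁/2`, `0 < q < 1`, then for
every `z > −C₁/2` the resolvent `(M^(11) − z)⁻¹` exists (on the corresponding subspace) and its
blocks decay exponentially: `‖((M^(11) − z)⁻¹)_{jk}‖ ≤ 2(C₁(1 − q))⁻¹ q^{|j−k|/p₀}`. -/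
theorem stmt_2
    {E : Type*} [NormedAddCommGroup E] [InnerProductSpace ℂ E] [CompleteSpace E]
    (M : E →L[ℂ] E) (hM : IsSelfAdjoint M) (hMnorm : ∃ C : ℝ, ‖M‖ ≤ C)
    (P : ℕ → E →L[ℂ] E)
    (hPsa : ∀ k, IsSelfAdjoint (P k)) (hPidem : ∀ k, P k ∘L P k = P k)
    (hPorth : ∀ j k, j ≠ k → P j ∘L P k = 0)
    (hPsum : ∀ x : E, HasSum (fun k => P k x) x)
    (p₀ N₀ N₁ : ℕ) (hp₀ : 0 < p₀)
    (hband : ∀ j k : ℕ, (p₀ : ℤ) < |(j : ℤ) - (k : ℤ)| → P j ∘L M ∘L P k = 0)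
    (C₁ q : ℝ) (hC₁ : 0 < C₁) (hq0 : 0 < q) (hq1 : q < 1)
    (Q M11 D : E →L[ℂ] E)
    (hQ : Q = ∑ k ∈ Finset.Ioc N₀ N₁, P k)
    (hM11 : M11 = Q ∘L M ∘L Q)
    (hD : D = ∑ k ∈ Finset.Ioc N₀ N₁, P k ∘L M ∘L P k)
    (hDneg : ∀ k ∈ Finset.Ioc N₀ N₁, ∀ x : E,
      (inner ℂ ((P k ∘L M ∘L P k) x) x : ℂ).re ≤ -C₁ * ‖P k x‖ ^ 2)
    (hclose : ‖M11 - D‖ ≤ q * C₁ / 2) :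
    ∀ z : ℝ, -C₁ / 2 < z →
      ∃ R : E →L[ℂ] E,
        Q ∘L R ∘L Q = R ∧
        R ∘L (M11 - (z : ℂ) • Q) = Q ∧
        (M11 - (z : ℂ) • Q) ∘L R = Q ∧
        ∀ j ∈ Finset.Ioc N₀ N₁, ∀ k ∈ Finset.Ioc N₀ N₁,
          ‖P j ∘L R ∘L P k‖
            ≤ 2 / (C₁ * (1 - q)) * q ^ (((|(j : ℤ) - (k : ℤ)| : ℤ) : ℝ) / (p₀ : ℝ)) :=
  stmt_2_general M P hPsa hPidem hPorth hPsum p₀ N₀ N₁ hband C₁ q hC₁ hq1 Q M11 D hQ hM11 hD hDneg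
    hclose
end

section
/- Let M be a bounded self-adjoint operator on H = H₀ ⊕ H₁ ⊕ H₂ with blocks M^(αβ), 0 ≤ α,β ≤ 2, such that M^(02) = 0 and M^(20) = 0. Suppose z ∈ ℂ is such that M^(11) − z, M^(22) − z, and the Schur complement X(z) = M^(11) − z − M^(12)(M^(22) − z)^{-1}M^(21) restricted to the appropriate spaces are all invertible, and moreover X̃(z) := M^(00) − z − M^(01) ((M'_2 − z)^{-1})^{(11)} M^(10) is invertible, where M'_2 is the operator built from blocks M^(αβ), α,β ∈ {1,2}. Then M − z is invertible and ((M − z)^{-1})^{(00)} = X̃(z)^{-1}. -/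
/-!
Put `P = P₀` and `Q = P₁ + P₂ = 1 - P₀`. Because `M^(02) = M^(20) = 0`, the Schur complement
of the corner `Q (M - z) Q = M'₂ - z` in `M - z` is exactly `X̃(z)`, so the claim is the
`2 × 2` Schur complement formula for the Peirce decomposition along `P`, which holds in any ring.
Write `x = a + b + c + d` with `a = P x P`, `b = P x Q`, `c = Q x P`, `d = Q x Q`, let `r`
invert `d` in `Q R Q` and `s` invert `S = a - b r c` in `P R P`. Then
`x = (1 + b r) (S + d) (1 + r c)`, where `b r` and `r c` square to zero and `S + d` has inverse
`s + r`; hence `x⁻¹ = (1 - r c) (s + r) (1 - b r)`, whose `P`-corner is `s`.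
-/

open ContinuousLinearMap

section Peirce

variable {R : Type*} [Ring R]

theorem mul_eq_zero_of_corners {a b e f u v : R} (hu : a * u * e = u) (hv : f * v * b = v)
    (hef : e * f = 0) : u * v = 0 := by
  rw [← hu, ← hv, mul_assoc, ← mul_assoc e, ← mul_assoc e, hef, zero_mul, zero_mul,
    mul_zero]

theorem IsIdempotentElem.mul_corner_mul {e f : R} (he : IsIdempotentElem e)
    (hf : IsIdempotentElem f) (u : R) : e * (e * u * f) * f = e * u * f := by
  rw [← mul_assoc, ← mul_assoc, he.eq, mul_assoc, hf.eq]

def Units.oneAddOfMulSelfEqZero (n : R) (hn : n * n = 0) : Rˣ where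
  val := 1 + n
  inv := 1 - n
  val_inv := by rw [← (Commute.one_left n).mul_self_sub_mul_self_eq, hn, mul_one, sub_zero]
  inv_val := by rw [← (Commute.one_left n).mul_self_sub_mul_self_eq', hn, mul_one, sub_zero]

/-- `r` stands for an inverse of the corner `(1 - p) x (1 - p)` in `(1 - p) R (1 - p)`. -/
def schurComplement (p x r : R) : R :=
  p * x * p - p * x * (1 - p) * r * ((1 - p) * x * p)

variable {p : R}

theorem IsIdempotentElem.mul_schurComplement_mul (hp : IsIdempotentElem p) (x r : R) :
    p * schurComplement p x r * p = schurComplement p x r := by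
  simp only [schurComplement, mul_sub, sub_mul, mul_assoc, hp.eq, hp.mul_self_mul]

theorem IsIdempotentElem.eq_mul_schurComplement_add_mul (hp : IsIdempotentElem p) {x r : R}
    (hr : (1 - p) * r * (1 - p) = r)
    (hrd : r * ((1 - p) * x * (1 - p)) = 1 - p) (hdr : (1 - p) * x * (1 - p) * r = 1 - p) :
    x = (1 + p * x * (1 - p) * r) * (schurComplement p x r + (1 - p) * x * (1 - p)) *
      (1 + r * ((1 - p) * x * p)) := by
  set q := 1 - p
  have hq : IsIdempotentElem q := hp.one_sub
  set b := p * x * q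
  set c := q * x * p
  set d := q * x * q
  set S := schurComplement p x r with hS_def
  have hS : p * S * p = S := hp.mul_schurComplement_mul x r
  have hrS : r * S = 0 := mul_eq_zero_of_corners hr hS hp.one_sub_mul_self
  have hSr : S * r = 0 := mul_eq_zero_of_corners hS hr hp.mul_one_sub_self
  have hrD : r * (S + d) = q := by rw [mul_add, hrS, zero_add, hrd]
  have hDr : (S + d) * r = q := by rw [add_mul, hSr, zero_add, hdr]
  calc x = (p + q) * x * (p + q) := by rw [add_sub_cancel, one_mul, mul_one]
    _ = p * x * p + b + c + d := by simp only [b, c, d]; noncomm_ring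
    _ = (S + d + b) + (q + b * r) * c := by
      rw [add_mul, ← mul_assoc, ← mul_assoc, hq.eq, hS_def, schurComplement]; abel
    _ = (S + d + b) * (1 + r * c) := by
      rw [mul_add, mul_one, ← mul_assoc (S + d + b) r c, add_mul (S + d) b r, hDr]
    _ = (1 + b * r) * (S + d) * (1 + r * c) := by
      rw [add_mul 1, one_mul, mul_assoc b, hrD, hq.mul_mul_self]

theorem IsIdempotentElem.isUnit_and_mul_inverse_mul_of_schurComplement
    (hp : IsIdempotentElem p) {x r s : R} (hr : (1 - p) * r * (1 - p) = r)
    (hrd : r * ((1 - p) * x * (1 - p)) = 1 - p) (hdr : (1 - p) * x * (1 - p) * r = 1 - p)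
    (hs : p * s * p = s) (hsS : s * schurComplement p x r = p)
    (hSs : schurComplement p x r * s = p) :
    IsUnit x ∧ p * Ring.inverse x * p = s := by
  set q := 1 - p
  set b := p * x * q
  set c := q * x * p
  set d := q * x * q
  set S := schurComplement p x r
  have hpq : p * q = 0 := hp.mul_one_sub_self
  have hqp : q * p = 0 := hp.one_sub_mul_self
  have hb : p * b * q = b := hp.mul_corner_mul hp.one_sub x
  have hc : q * c * p = c := hp.one_sub.mul_corner_mul hp x
  have hd : q * d * q = d := hp.one_sub.mul_corner_mul hp.one_sub x
  have hS : p * S * p = S := hp.mul_schurComplement_mul x r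
  have hpp : p * p * p = p := by rw [hp.eq, hp.eq]
  have hDinv : (S + d) * (s + r) = 1 := by
    rw [mul_add, add_mul, add_mul, hSs, mul_eq_zero_of_corners hS hr hpq,
      mul_eq_zero_of_corners hd hs hqp, hdr, add_zero, zero_add, add_sub_cancel]
  have hinvD : (s + r) * (S + d) = 1 := by
    rw [mul_add, add_mul, add_mul, hsS, mul_eq_zero_of_corners hs hd hpq,
      mul_eq_zero_of_corners hr hS hqp, hrd, add_zero, zero_add, add_sub_cancel]
  let U := Units.oneAddOfMulSelfEqZero (b * r) (by
    rw [mul_assoc, ← mul_assoc r, mul_eq_zero_of_corners hr hb hqp, zero_mul, mul_zero])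
  let V := Units.oneAddOfMulSelfEqZero (r * c) (by
    rw [mul_assoc, ← mul_assoc c, mul_eq_zero_of_corners hc hr hpq, zero_mul, mul_zero])
  let D : Rˣ := ⟨S + d, s + r, hDinv, hinvD⟩
  have hx : x = ↑(U * D * V) := hp.eq_mul_schurComplement_add_mul hr hrd hdr
  refine ⟨hx ▸ (U * D * V).isUnit, ?_⟩
  have hpr : p * r = 0 := mul_eq_zero_of_corners hpp hr hpq
  have hrp : r * p = 0 := mul_eq_zero_of_corners hr hpp hqp
  rw [hx, Ring.inverse_unit, mul_inv_rev, mul_inv_rev]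
  change p * ((1 - r * c) * ((s + r) * (1 - b * r))) * p = s
  rw [← mul_assoc, mul_sub, mul_one, ← mul_assoc p r, hpr, zero_mul, sub_zero, mul_assoc,
    mul_assoc, sub_mul, one_mul, mul_assoc b, hrp, mul_zero, sub_zero, ← mul_assoc, mul_add,
    add_mul, hs, hpr, zero_mul, add_zero]

end Peirce

section ScalarShift

variable {𝕜 A : Type*} [CommSemiring 𝕜] [Ring A] [Algebra 𝕜 A]

theorem IsIdempotentElem.mul_sub_smul_one_mul {e : A} (he : IsIdempotentElem e) (x : A)
    (z : 𝕜) : e * (x - z • 1) * e = e * x * e - z • e := by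
  rw [mul_sub, sub_mul, mul_smul_comm, mul_one, smul_mul_assoc, he.eq]

theorem mul_sub_smul_one_mul_of_mul_eq_zero {e f : A} (hef : e * f = 0) (x : A) (z : 𝕜) :
    e * (x - z • 1) * f = e * x * f := by
  rw [mul_sub, sub_mul, mul_smul_comm, mul_one, smul_mul_assoc, hef, smul_zero, sub_zero]

end ScalarShift

theorem stmt_11_general
    {E : Type*} [NormedAddCommGroup E] [InnerProductSpace ℂ E]
    (M P₀ P₁ P₂ : E →L[ℂ] E)
    (hP₁idem : P₁ ∘L P₁ = P₁)
    (h01 : P₀ ∘L P₁ = 0) (h02 : P₀ ∘L P₂ = 0)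
    (hsum : P₀ + P₁ + P₂ = 1)
    (hM02 : P₀ ∘L M ∘L P₂ = 0) (hM20 : P₂ ∘L M ∘L P₀ = 0)
    (z : ℂ)
    -- `M'₂ − z` is invertible on `H₁ ⊕ H₂`:
    (R2 : E →L[ℂ] E) (hR2a : (P₁ + P₂) ∘L R2 ∘L (P₁ + P₂) = R2)
    (hR2b : R2 ∘L ((P₁ + P₂) ∘L M ∘L (P₁ + P₂) - z • (P₁ + P₂)) = P₁ + P₂)
    (hR2c : ((P₁ + P₂) ∘L M ∘L (P₁ + P₂) - z • (P₁ + P₂)) ∘L R2 = P₁ + P₂)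
    -- `X̃(z)` is invertible on `H₀`:
    (Rt : E →L[ℂ] E) (hRta : P₀ ∘L Rt ∘L P₀ = Rt)
    (hRtb : Rt ∘L (P₀ ∘L M ∘L P₀ - z • P₀
        - (P₀ ∘L M ∘L P₁) ∘L (P₁ ∘L R2 ∘L P₁) ∘L (P₁ ∘L M ∘L P₀)) = P₀)
    (hRtc : (P₀ ∘L M ∘L P₀ - z • P₀
        - (P₀ ∘L M ∘L P₁) ∘L (P₁ ∘L R2 ∘L P₁) ∘L (P₁ ∘L M ∘L P₀)) ∘L Rt = P₀) :
    IsUnit (M - z • (1 : E →L[ℂ] E)) ∧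
    P₀ ∘L Ring.inverse (M - z • (1 : E →L[ℂ] E)) ∘L P₀ = Rt := by
  have hQ : P₁ + P₂ = 1 - P₀ := by rw [← hsum]; abel
  have hP₀Q : P₀ * (P₁ + P₂) = 0 := by rw [mul_add, mul_def, mul_def, h01, h02, add_zero]
  have hP₀ : IsIdempotentElem P₀ :=
    (IsIdempotentElem.of_mul_add hP₀Q (by rw [← add_assoc, hsum])).1
  have hP₁ : IsIdempotentElem P₁ := hP₁idem
  rw [hQ] at hR2a hR2b hR2c
  have hd : (1 - P₀) * (M - z • 1) * (1 - P₀) = (1 - P₀) * M * (1 - P₀) - z • (1 - P₀) :=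
    hP₀.one_sub.mul_sub_smul_one_mul M z
  have hb : P₀ * (M - z • 1) * (1 - P₀) = P₀ * M * P₁ := by
    rw [mul_sub_smul_one_mul_of_mul_eq_zero hP₀.mul_one_sub_self, ← hQ, mul_add, add_eq_left,
      mul_assoc]
    exact hM02
  have hc : (1 - P₀) * (M - z • 1) * P₀ = P₁ * M * P₀ := by
    rw [mul_sub_smul_one_mul_of_mul_eq_zero hP₀.one_sub_mul_self, ← hQ, add_mul, add_mul,
      add_eq_left, mul_assoc]
    exact hM20
  have hS : schurComplement P₀ (M - z • 1) R2
      = P₀ ∘L M ∘L P₀ - z • P₀ - (P₀ ∘L M ∘L P₁) ∘L (P₁ ∘L R2 ∘L P₁) ∘L (P₁ ∘L M ∘L P₀) := by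
    rw [schurComplement, hP₀.mul_sub_smul_one_mul, hb, hc]
    simp only [← mul_def, mul_assoc, hP₁.mul_self_mul]
  exact hP₀.isUnit_and_mul_inverse_mul_of_schurComplement (by rw [mul_assoc]; exact hR2a)
    (by rw [hd, mul_assoc]; exact hR2b) (by rw [hd, mul_assoc]; exact hR2c)
    (by rw [mul_assoc]; exact hRta) (by rw [hS]; exact hRtb) (by rw [hS]; exact hRtc)

/-- nested Schur complement identity, (3.7)–(3.10) of Proposition 3.1:
for a bounded self-adjoint operator `M` on `H₀ ⊕ H₁ ⊕ H₂` with `M^(02) = M^(20) = 0`, if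
`M^(11) − z`, `M^(22) − z`, the Schur complement
`X(z) = M^(11) − z − M^(12)(M^(22) − z)⁻¹M^(21)`, and
`X̃(z) = M^(00) − z − M^(01)((M'₂ − z)⁻¹)^(11)M^(10)` are all invertible (on the corresponding
subspaces, where `M'₂` is built from the blocks `M^(αβ)`, `α, β ∈ {1, 2}`), then `M − z` is
invertible and `((M − z)⁻¹)^(00) = X̃(z)⁻¹`. -/
theorem stmt_11
    {E : Type*} [NormedAddCommGroup E] [InnerProductSpace ℂ E] [CompleteSpace E]
    (M P₀ P₁ P₂ : E →L[ℂ] E)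
    (hM : IsSelfAdjoint M)
    (hP₀sa : IsSelfAdjoint P₀) (hP₁sa : IsSelfAdjoint P₁) (hP₂sa : IsSelfAdjoint P₂)
    (hP₀idem : P₀ ∘L P₀ = P₀) (hP₁idem : P₁ ∘L P₁ = P₁) (hP₂idem : P₂ ∘L P₂ = P₂)
    (h01 : P₀ ∘L P₁ = 0) (h02 : P₀ ∘L P₂ = 0) (h12 : P₁ ∘L P₂ = 0)
    (hsum : P₀ + P₁ + P₂ = 1)
    (hM02 : P₀ ∘L M ∘L P₂ = 0) (hM20 : P₂ ∘L M ∘L P₀ = 0)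
    (z : ℂ)
    -- `M^(11) − z` is invertible on `H₁`:
    (R11 : E →L[ℂ] E) (hR11a : P₁ ∘L R11 ∘L P₁ = R11)
    (hR11b : R11 ∘L (P₁ ∘L M ∘L P₁ - z • P₁) = P₁)
    (hR11c : (P₁ ∘L M ∘L P₁ - z • P₁) ∘L R11 = P₁)
    -- `M^(22) − z` is invertible on `H₂`:
    (R22 : E →L[ℂ] E) (hR22a : P₂ ∘L R22 ∘L P₂ = R22)
    (hR22b : R22 ∘L (P₂ ∘L M ∘L P₂ - z • P₂) = P₂)
    (hR22c : (P₂ ∘L M ∘L P₂ - z • P₂) ∘L R22 = P₂)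
    -- the Schur complement `X(z)` is invertible on `H₁`:
    (RX : E →L[ℂ] E) (hRXa : P₁ ∘L RX ∘L P₁ = RX)
    (hRXb : RX ∘L (P₁ ∘L M ∘L P₁ - z • P₁ - (P₁ ∘L M ∘L P₂) ∘L R22 ∘L (P₂ ∘L M ∘L P₁)) = P₁)
    (hRXc : (P₁ ∘L M ∘L P₁ - z • P₁ - (P₁ ∘L M ∘L P₂) ∘L R22 ∘L (P₂ ∘L M ∘L P₁)) ∘L RX = P₁)
    -- `M'₂ − z` is invertible on `H₁ ⊕ H₂`:
    (R2 : E →L[ℂ] E) (hR2a : (P₁ + P₂) ∘L R2 ∘L (P₁ + P₂) = R2)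
    (hR2b : R2 ∘L ((P₁ + P₂) ∘L M ∘L (P₁ + P₂) - z • (P₁ + P₂)) = P₁ + P₂)
    (hR2c : ((P₁ + P₂) ∘L M ∘L (P₁ + P₂) - z • (P₁ + P₂)) ∘L R2 = P₁ + P₂)
    -- `X̃(z)` is invertible on `H₀`:
    (Rt : E →L[ℂ] E) (hRta : P₀ ∘L Rt ∘L P₀ = Rt)
    (hRtb : Rt ∘L (P₀ ∘L M ∘L P₀ - z • P₀
        - (P₀ ∘L M ∘L P₁) ∘L (P₁ ∘L R2 ∘L P₁) ∘L (P₁ ∘L M ∘L P₀)) = P₀)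
    (hRtc : (P₀ ∘L M ∘L P₀ - z • P₀
        - (P₀ ∘L M ∘L P₁) ∘L (P₁ ∘L R2 ∘L P₁) ∘L (P₁ ∘L M ∘L P₀)) ∘L Rt = P₀) :
    IsUnit (M - z • (1 : E →L[ℂ] E)) ∧
    P₀ ∘L Ring.inverse (M - z • (1 : E →L[ℂ] E)) ∘L P₀ = Rt :=
  stmt_11_general M P₀ P₁ P₂ hP₁idem h01 h02 hsum hM02 hM20 z R2 hR2a hR2b hR2c Rt hRta hRtb hRtc
end

section
/- Let K be a self-adjoint operator with 0 ≤ K ≤ (1 + k₀/N)·I, let E_λ denote its spectral projections, and let P be an orthogonal projection with ‖(1 − P)·E_{(1−c/(2W), ∞)}(K)‖ ≤ η. Then for any vector g, (K^{N−1}g, g) = (K^{N−1}Pg, Pg) + O(η‖g‖² + (1 − c/(2W))^{N−1}‖g‖²). In particular if N/W → ∞ and η‖g‖² → 0, the difference is o(1)·(1+k₀/N)^{N-1}. -/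
/-!
Split `K ^ n = K ^ n E + K ^ n (1 - E)` with `E` the spectral projection. On the range of
`1 - E` the quadratic-form bound makes `‖K (1 - E)‖ ≤ 1 - c/(2W)`, so both low parts are
`O((1 - c/(2W)) ^ n ‖g‖²)`. On the range of `E` we only know `‖K E‖ ≤ 1 + k₀/N`, whose
`(N-1)`-st power is at most `exp k₀`; there the two quadratic forms are evaluated at `E g` and
`E P g`, which differ by `E (1 - P) g`, and `‖E (1 - P)‖ = ‖((1 - P) E)⋆‖ ≤ η`.
-/

open ContinuousLinearMap

theorem IsIdempotentElem.mul_mul_self_of_commute {R : Type*} [Semigroup R] {a q : R}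
    (hq : IsIdempotentElem q) (haq : Commute a q) : q * (a * q) = a * q := by
  rw [← mul_assoc, ← haq.eq, mul_assoc, hq.eq]

theorem IsIdempotentElem.norm_pow_mul_le_of_commute {R : Type*} [NormedRing R] {a q : R}
    (hq : IsIdempotentElem q) (hq1 : ‖q‖ ≤ 1) (haq : Commute a q) (n : ℕ) :
    ‖a ^ n * q‖ ≤ ‖a * q‖ ^ n := by
  rcases Nat.eq_zero_or_pos n with rfl | hn
  · simpa using hq1
  have hpow : a ^ n * q = (a * q) ^ n * q := by
    rw [haq.mul_pow, mul_assoc, ← pow_succ, hq.pow_succ_eq]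
  calc ‖a ^ n * q‖ ≤ ‖(a * q) ^ n‖ * ‖q‖ := hpow ▸ norm_mul_le _ _
    _ ≤ ‖a * q‖ ^ n * 1 := by gcongr; exact norm_pow_le' _ hn
    _ = ‖a * q‖ ^ n := mul_one _

theorem IsSelfAdjoint.norm_mul_comm {R : Type*} [NormedRing R] [StarRing R] [NormedStarGroup R]
    {a b : R} (ha : IsSelfAdjoint a) (hb : IsSelfAdjoint b) : ‖a * b‖ = ‖b * a‖ := by
  have h := norm_star (b * a)
  rwa [star_mul, ha.star_eq, hb.star_eq] at h

theorem Real.one_add_div_pow_le_exp {k : ℝ} (hk : 0 ≤ k) {m N : ℕ} (hmN : m ≤ N) :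
    (1 + k / N) ^ m ≤ Real.exp k := by
  have h1 : 1 ≤ 1 + k / N := le_add_of_nonneg_right (by positivity)
  refine (pow_le_pow_right₀ h1 hmN).trans ?_
  simpa [neg_div] using
    Real.one_sub_div_pow_le_exp_neg (n := N) (t := -k) (by linarith [N.cast_nonneg (α := ℝ)])

namespace ContinuousLinearMap

section RCLike

variable {𝕜 E : Type*} [RCLike 𝕜] [NormedAddCommGroup E] [InnerProductSpace 𝕜 E]

theorem norm_inner_apply_self_sub_le (A : E →L[𝕜] E) (u v : E) :
    ‖inner 𝕜 (A u) u - inner 𝕜 (A v) v‖ ≤ ‖A‖ * (‖u‖ + ‖v‖) * ‖u - v‖ := by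
  have hsplit : inner 𝕜 (A u) u - inner 𝕜 (A v) v
      = inner 𝕜 (A u) (u - v) + inner 𝕜 (A (u - v)) v := by
    simp only [map_sub, inner_sub_left, inner_sub_right]
    ring
  rw [hsplit]
  calc _ ≤ ‖A u‖ * ‖u - v‖ + ‖A (u - v)‖ * ‖v‖ :=
        (norm_add_le _ _).trans (add_le_add (norm_inner_le_norm _ _) (norm_inner_le_norm _ _))
    _ ≤ ‖A‖ * ‖u‖ * ‖u - v‖ + ‖A‖ * ‖u - v‖ * ‖v‖ := by
        gcongr <;> exact A.le_opNorm _
    _ = ‖A‖ * (‖u‖ + ‖v‖) * ‖u - v‖ := by ring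

theorem norm_inner_apply_self_le (A : E →L[𝕜] E) (u : E) : ‖inner 𝕜 (A u) u‖ ≤ ‖A‖ * ‖u‖ ^ 2 :=
  calc _ ≤ ‖A u‖ * ‖u‖ := norm_inner_le_norm _ _
    _ ≤ ‖A‖ * ‖u‖ * ‖u‖ := by gcongr; exact A.le_opNorm u
    _ = ‖A‖ * ‖u‖ ^ 2 := by ring

variable [CompleteSpace E]

theorem _root_.IsStarProjection.norm_apply_le {p : E →L[𝕜] E} (hp : IsStarProjection p)
    (x : E) : ‖p x‖ ≤ ‖x‖ :=
  (p.le_opNorm x).trans (mul_le_of_le_one_left (norm_nonneg x) (hp.norm_le p))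

theorem inner_mul_mul_apply_self_of_isSelfAdjoint {Q : E →L[𝕜] E} (hQ : IsSelfAdjoint Q)
    (A : E →L[𝕜] E) (u : E) :
    inner 𝕜 ((Q * A * Q) u) u = inner 𝕜 (A (Q u)) (Q u) :=
  hQ.isSymmetric _ _

theorem inner_apply_self_eq_add_of_commute {A Q : E →L[𝕜] E} (hQ : IsStarProjection Q)
    (hAQ : Commute A Q) (u : E) :
    inner 𝕜 (A u) u = inner 𝕜 ((A * Q) (Q u)) (Q u) + inner 𝕜 ((A * (1 - Q)) u) u := by
  have hconj : Q * (A * Q) * Q = A * Q := by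
    rw [hQ.isIdempotentElem.mul_mul_self_of_commute hAQ, mul_assoc, hQ.isIdempotentElem.eq]
  rw [← inner_mul_mul_apply_self_of_isSelfAdjoint hQ.isSelfAdjoint, hconj, ← inner_add_left,
    ← add_apply, ← mul_add, add_sub_cancel, mul_one]

theorem norm_inner_pow_apply_sub_le {K P Q : E →L[𝕜] E} (hP : IsStarProjection P)
    (hQ : IsStarProjection Q) (hKQ : Commute K Q) {μ lam η : ℝ} (hhigh : ‖K * Q‖ ≤ μ)
    (hlow : ‖K * (1 - Q)‖ ≤ lam) (hPQ : ‖(1 - P) * Q‖ ≤ η) (n : ℕ) (g : E) :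
    ‖inner 𝕜 ((K ^ n) g) g - inner 𝕜 ((K ^ n) (P g)) (P g)‖
      ≤ 2 * μ ^ n * η * ‖g‖ ^ 2 + 2 * lam ^ n * ‖g‖ ^ 2 := by
  have hhigh_pow : ‖K ^ n * Q‖ ≤ μ ^ n :=
    (hQ.isIdempotentElem.norm_pow_mul_le_of_commute (hQ.norm_le Q) hKQ n).trans
      (pow_le_pow_left₀ (norm_nonneg _) hhigh n)
  have hlow_pow : ‖K ^ n * (1 - Q)‖ ≤ lam ^ n :=
    (hQ.one_sub.isIdempotentElem.norm_pow_mul_le_of_commute (hQ.one_sub.norm_le _)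
      ((Commute.one_right K).sub_right hKQ) n).trans (pow_le_pow_left₀ (norm_nonneg _) hlow n)
  have hlow_inner : ∀ u, ‖inner 𝕜 ((K ^ n * (1 - Q)) u) u‖ ≤ lam ^ n * ‖u‖ ^ 2 := fun u =>
    (norm_inner_apply_self_le _ u).trans (by gcongr)
  have hQP : ‖Q g - Q (P g)‖ ≤ η * ‖g‖ :=
    calc ‖Q g - Q (P g)‖ = ‖(Q * (1 - P)) g‖ := by simp [mul_sub]
      _ ≤ ‖Q * (1 - P)‖ * ‖g‖ := le_opNorm _ _
      _ ≤ η * ‖g‖ := by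
        rw [hQ.isSelfAdjoint.norm_mul_comm hP.one_sub.isSelfAdjoint]; gcongr
  have hhigh_inner : ‖inner 𝕜 ((K ^ n * Q) (Q g)) (Q g)
      - inner 𝕜 ((K ^ n * Q) (Q (P g))) (Q (P g))‖ ≤ 2 * μ ^ n * η * ‖g‖ ^ 2 := by
    refine (norm_inner_apply_self_sub_le _ _ _).trans ?_
    have hPg := hP.norm_apply_le g
    have hQg := hQ.norm_apply_le g
    have hQPg := (hQ.norm_apply_le (P g)).trans hPg
    have hμ : 0 ≤ μ ^ n := (norm_nonneg _).trans hhigh_pow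
    calc _ ≤ μ ^ n * (‖g‖ + ‖g‖) * (η * ‖g‖) := by gcongr
      _ = 2 * μ ^ n * η * ‖g‖ ^ 2 := by ring
  rw [inner_apply_self_eq_add_of_commute hQ (hKQ.pow_left n) g,
    inner_apply_self_eq_add_of_commute hQ (hKQ.pow_left n) (P g)]
  calc _ ≤ ‖inner 𝕜 ((K ^ n * Q) (Q g)) (Q g) - inner 𝕜 ((K ^ n * Q) (Q (P g))) (Q (P g))‖
        + ‖inner 𝕜 ((K ^ n * (1 - Q)) g) g‖ + ‖inner 𝕜 ((K ^ n * (1 - Q)) (P g)) (P g)‖ := by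
        rw [add_sub_add_comm, add_assoc]
        exact (norm_add_le _ _).trans (add_le_add_right (norm_sub_le _ _) _)
    _ ≤ 2 * μ ^ n * η * ‖g‖ ^ 2 + lam ^ n * ‖g‖ ^ 2 + lam ^ n * ‖P g‖ ^ 2 := by
        gcongr; exacts [hlow_inner g, hlow_inner (P g)]
    _ ≤ 2 * μ ^ n * η * ‖g‖ ^ 2 + 2 * lam ^ n * ‖g‖ ^ 2 := by
        have hlam : 0 ≤ lam ^ n := (norm_nonneg _).trans hlow_pow
        have hPg : lam ^ n * ‖P g‖ ^ 2 ≤ lam ^ n * ‖g‖ ^ 2 := by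
          gcongr; exact hP.norm_apply_le g
        linarith

end RCLike

section Complex

variable {E : Type*} [NormedAddCommGroup E] [InnerProductSpace ℂ E] [CompleteSpace E]

theorem IsPositive.norm_le_of_re_inner_le {T : E →L[ℂ] E} (hT : T.IsPositive) {a : ℝ}
    (ha : 0 ≤ a) (h : ∀ x, RCLike.re (inner ℂ (T x) x) ≤ a * ‖x‖ ^ 2) : ‖T‖ ≤ a := by
  rw [CStarAlgebra.norm_le_iff_le_algebraMap T ha ((nonneg_iff_isPositive T).2 hT), le_def]
  refine isPositive_def'.2
    ⟨(IsSelfAdjoint.algebraMap _ (.all a)).sub hT.isSelfAdjoint, fun x => ?_⟩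
  have hx : RCLike.re (inner ℂ ((algebraMap ℝ (E →L[ℂ] E) a) x) x) = a * ‖x‖ ^ 2 := by
    simp [Algebra.algebraMap_eq_smul_one, inner_self_eq_norm_sq_to_K, ← Complex.ofReal_pow]
  rw [reApplyInnerSelf, sub_apply, inner_sub_left, map_sub, hx]
  linarith [h x]

theorem IsPositive.norm_mul_le_of_re_inner_le {K Q : E →L[ℂ] E} (hK : K.IsPositive)
    (hQ : IsStarProjection Q) (hKQ : Commute K Q) {a : ℝ} (ha : 0 ≤ a)
    (h : ∀ x, RCLike.re (inner ℂ (K (Q x)) (Q x)) ≤ a * ‖Q x‖ ^ 2) : ‖K * Q‖ ≤ a := by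
  have hconj : Q * (K * Q) = K * Q := hQ.isIdempotentElem.mul_mul_self_of_commute hKQ
  refine IsPositive.norm_le_of_re_inner_le ?_ ha fun x => ?_
  · simpa [hQ.isSelfAdjoint.adjoint_eq, ← mul_def, hconj] using hK.conj_adjoint Q
  · rw [← hconj, ← mul_assoc, inner_mul_mul_apply_self_of_isSelfAdjoint hQ.isSelfAdjoint]
    exact (h x).trans (by gcongr; exact hQ.norm_apply_le x)

end Complex

end ContinuousLinearMap

/-- the spectral-splitting argument at the end of Lemma 3.1: let `K` be
self-adjoint with `0 ≤ K ≤ (1 + k₀/N)`, `Eproj` its spectral projection onto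
`(1 − c/(2W), ∞)` and `P` an orthogonal projection with `‖(1 − P)Eproj‖ ≤ η`.  Then
`(K^{N−1}g, g) = (K^{N−1}Pg, Pg) + O(η‖g‖² + (1 − c/(2W))^{N−1}‖g‖²)`, with a constant
depending only on `k₀`. -/
theorem stmt_13 :
    ∀ k₀ : ℝ, 0 ≤ k₀ →
    ∃ C : ℝ, 0 < C ∧
      ∀ (E : Type) (_ : NormedAddCommGroup E) (_ : InnerProductSpace ℂ E) (_ : CompleteSpace E),
      ∀ (K P Eproj : E →L[ℂ] E) (g : E) (N : ℕ) (c W η : ℝ),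
        1 ≤ N → 0 < c → 0 < W → c / (2 * W) < 1 → 0 ≤ η →
        IsSelfAdjoint K →
        (∀ x : E, 0 ≤ (inner ℂ (K x) x : ℂ).re) →
        (∀ x : E, (inner ℂ (K x) x : ℂ).re ≤ (1 + k₀ / N) * ‖x‖ ^ 2) →
        IsSelfAdjoint P → P ∘L P = P →
        -- `Eproj` is the spectral projection of `K` onto `(1 − c/(2W), ∞)`:
        IsSelfAdjoint Eproj → Eproj ∘L Eproj = Eproj → K ∘L Eproj = Eproj ∘L K →
        (∀ x : E, (1 - c / (2 * W)) * ‖Eproj x‖ ^ 2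
            ≤ (inner ℂ (K (Eproj x)) (Eproj x) : ℂ).re) →
        (∀ x : E, (inner ℂ (K ((1 - Eproj) x)) ((1 - Eproj) x) : ℂ).re
            ≤ (1 - c / (2 * W)) * ‖(1 - Eproj) x‖ ^ 2) →
        ‖(1 - P) ∘L Eproj‖ ≤ η →
        ‖(inner ℂ (K ^ (N - 1) • g) g : ℂ) - (inner ℂ (K ^ (N - 1) • (P g)) (P g) : ℂ)‖
          ≤ C * (η * ‖g‖ ^ 2 + (1 - c / (2 * W)) ^ (N - 1) * ‖g‖ ^ 2) := by
  intro k₀ hk₀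
  refine ⟨2 * Real.exp k₀, by positivity, ?_⟩
  intro E _ _ _ K P Eproj g N c W η _ _ _ hcW hη hKsa hKpos hKub hPsa hP2 hEsa hE2 hKE _ hlow hPE
  have hK : K.IsPositive := isPositive_def'.2 ⟨hKsa, hKpos⟩
  have hE : IsStarProjection Eproj := ⟨hE2, hEsa⟩
  have hlam : 0 ≤ 1 - c / (2 * W) := sub_nonneg.2 hcW.le
  have hhigh_norm : ‖K * Eproj‖ ≤ 1 + k₀ / N :=
    hK.norm_mul_le_of_re_inner_le hE hKE (by positivity) fun x => hKub _
  have hlow_norm : ‖K * (1 - Eproj)‖ ≤ 1 - c / (2 * W) :=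
    hK.norm_mul_le_of_re_inner_le hE.one_sub ((Commute.one_right K).sub_right hKE) hlam hlow
  have hexp : (1 + k₀ / N) ^ (N - 1) ≤ Real.exp k₀ :=
    Real.one_add_div_pow_le_exp hk₀ (N.sub_le 1)
  refine (norm_inner_pow_apply_sub_le ⟨hP2, hPsa⟩ hE hKE hhigh_norm hlow_norm hPE (N - 1) g).trans
    ?_
  have hηg : 0 ≤ η * ‖g‖ ^ 2 := by positivity
  have hlamg : 0 ≤ (1 - c / (2 * W)) ^ (N - 1) * ‖g‖ ^ 2 := by positivity
  linarith [mul_le_mul_of_nonneg_right hexp hηg,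
    mul_le_mul_of_nonneg_right (Real.one_le_exp hk₀) hlamg]
end

section
/- Let f(Q) = (1/2)(−Tr(QQ*) + log det 𝒬 + 2u²) where 𝒬 = [[ẑ, iQ],[iQ*, ẑ*]], ẑ = z·I₂, |z| < 1, u = (1 − |z|²)^{1/2}, and Q ranges over 2×2 complex matrices. Then f(Q) ≤ 0 with equality exactly on the set {Q = u·U : U ∈ U(2)}; i.e. the maximum of f over all 2×2 complex Q is attained precisely at Q = uU with U unitary. -/
/-!
Since the lower right block `z̄ • 1` is scalar, `det 𝒬 = det (|z|² + QQ*)`. In terms of the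
eigenvalues `tᵢ ≥ 0` of `QQ*`, `2 f(Q) = Σᵢ (log (|z|² + tᵢ) - (|z|² + tᵢ - 1))`, and each summand
is `≤ 0` by `log x ≤ x - 1`, with equality iff `|z|² + tᵢ = 1`, i.e. `tᵢ = u²`. All eigenvalues
equal to `u²` means `QQ* = u²`, i.e. `Q / u` is unitary.
-/

open Matrix

/-- The 4×4 supermatrix `𝒬 = [[ẑ, iQ], [iQ*, ẑ*]]` with `ẑ = z·I₂` (the case `ζ = 0` of
(1.8) of the paper). -/
noncomputable def calQ (z : ℂ) (Q : Matrix (Fin 2) (Fin 2) ℂ) :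
    Matrix (Fin 2 ⊕ Fin 2) (Fin 2 ⊕ Fin 2) ℂ :=
  Matrix.fromBlocks (z • 1) (Complex.I • Q) (Complex.I • Qᴴ) ((starRingEnd ℂ) z • 1)

open scoped ComplexOrder

namespace Real

variable {ι : Type*} {s : Finset ι} {x : ι → ℝ}

theorem sum_log_le_sum_sub_one (hx : ∀ i ∈ s, 0 < x i) :
    ∑ i ∈ s, log (x i) ≤ ∑ i ∈ s, (x i - 1) :=
  Finset.sum_le_sum fun i hi ↦ log_le_sub_one_of_pos (hx i hi)

theorem sum_log_eq_sum_sub_one_iff (hx : ∀ i ∈ s, 0 < x i) :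
    ∑ i ∈ s, log (x i) = ∑ i ∈ s, (x i - 1) ↔ ∀ i ∈ s, x i = 1 := by
  rw [Finset.sum_eq_sum_iff_of_le fun i hi ↦ log_le_sub_one_of_pos (hx i hi)]
  refine forall₂_congr fun i hi ↦ ⟨fun h ↦ ?_, fun h ↦ by simp [h]⟩
  by_contra hne
  exact (log_lt_sub_one_of_pos (hx i hi) hne).ne h

end Real

namespace Matrix

section BlockDeterminant

variable {n R : Type*} [Fintype n] [DecidableEq n] [CommRing R]

theorem det_fromBlocks_smul_one_mul_pow (A B C : Matrix n n R) (d : R) :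
    (fromBlocks A B C (d • 1)).det * d ^ Fintype.card n =
      (d • A - B * C).det * d ^ Fintype.card n := by
  have hprod : fromBlocks A B C (d • 1) * fromBlocks (d • 1) 0 (-C) 1 =
      fromBlocks (d • A - B * C) B 0 (d • 1) := by
    simp [fromBlocks_multiply, sub_eq_add_neg]
  simpa [det_mul, det_fromBlocks_zero₁₂, det_fromBlocks_zero₂₁, det_smul] using
    congrArg det hprod

/-- No invertibility of `d` is needed: `d ^ card n` cancels when `d` is an indeterminate. -/
theorem det_fromBlocks_smul_one (A B C : Matrix n n R) (d : R) :
    (fromBlocks A B C (d • 1)).det = (d • A - B * C).det := by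
  have generic := (Polynomial.isRegular_X_pow _).right <|
    det_fromBlocks_smul_one_mul_pow (A.map Polynomial.C) (B.map Polynomial.C)
      (C.map Polynomial.C) Polynomial.X
  have := congrArg (Polynomial.evalRingHom d) generic
  simp only [RingHom.map_det] at this
  convert this using 2
  · ext (i | i) (j | j) <;> simp [one_apply, apply_ite (Polynomial.eval d)]
  · ext i j
    simp [mul_apply, Polynomial.eval_finsetSum, mul_comm d]

end BlockDeterminant

section Spectral

variable {n 𝕜 : Type*} [Fintype n] [DecidableEq n] [RCLike 𝕜] {H : Matrix n n 𝕜}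

theorem IsHermitian.eq_conj_diagonal (hH : H.IsHermitian) :
    H = (hH.eigenvectorUnitary : Matrix n n 𝕜) * diagonal (fun i ↦ (hH.eigenvalues i : 𝕜)) *
      star (hH.eigenvectorUnitary : Matrix n n 𝕜) := by
  conv_lhs => rw [hH.spectral_theorem]
  rfl

theorem IsHermitian.det_smul_one_add (hH : H.IsHermitian) (a : ℝ) :
    (a • 1 + H).det = ∏ i, ((a + hH.eigenvalues i : ℝ) : 𝕜) := by
  have hU := hH.eigenvectorUnitary.2
  have hshift : diagonal (fun i ↦ ((a + hH.eigenvalues i : ℝ) : 𝕜)) =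
      a • 1 + diagonal (fun i ↦ (hH.eigenvalues i : 𝕜)) := by
    ext i j
    by_cases hij : i = j <;> simp [hij, Algebra.algebraMap_eq_smul_one, add_smul]
  have hconj : a • 1 + H = hH.eigenvectorUnitary *
      diagonal (fun i ↦ ((a + hH.eigenvalues i : ℝ) : 𝕜)) *
      star (hH.eigenvectorUnitary : Matrix n n 𝕜) := by
    rw [hshift, mul_add, add_mul, Matrix.mul_smul, Matrix.smul_mul, Matrix.mul_one,
      Unitary.mul_star_self_of_mem hU, ← hH.eq_conj_diagonal]
  rw [hconj, det_mul_comm, ← mul_assoc, Unitary.star_mul_self_of_mem hU, one_mul, det_diagonal]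

theorem IsHermitian.eq_smul_one_of_eigenvalues_eq (hH : H.IsHermitian) {c : ℝ}
    (hc : ∀ i, hH.eigenvalues i = c) : H = c • 1 := by
  have hU := hH.eigenvectorUnitary.2
  have hdiag : diagonal (fun i ↦ (hH.eigenvalues i : 𝕜)) = c • 1 := by
    ext i j
    by_cases hij : i = j <;> simp [hij, hc, Algebra.algebraMap_eq_smul_one]
  rw [hH.eq_conj_diagonal, hdiag, Matrix.mul_smul, Matrix.smul_mul, Matrix.mul_one,
    Unitary.mul_star_self_of_mem hU]

theorem IsHermitian.re_det_smul_one_add (hH : H.IsHermitian) (a : ℝ) :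
    RCLike.re (a • 1 + H).det = ∏ i, (a + hH.eigenvalues i) := by
  rw [hH.det_smul_one_add, ← RCLike.ofReal_prod, RCLike.ofReal_re]

theorem IsHermitian.re_trace_add_card_mul (hH : H.IsHermitian) (a : ℝ) :
    RCLike.re H.trace + Fintype.card n * (a - 1) = ∑ i, (a + hH.eigenvalues i - 1) := by
  rw [hH.trace_eq_sum_eigenvalues, ← RCLike.ofReal_sum, RCLike.ofReal_re]
  simp only [Finset.sum_sub_distrib, Finset.sum_add_distrib, Finset.sum_const, Finset.card_univ,
    nsmul_eq_mul, mul_one]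
  ring

variable {a : ℝ}

theorem PosSemidef.smul_one_add_eigenvalues_pos (hH : H.PosSemidef) (ha : 0 ≤ a)
    (hdet : 0 < RCLike.re (a • 1 + H).det) (i : n) : 0 < a + hH.isHermitian.eigenvalues i := by
  rw [hH.isHermitian.re_det_smul_one_add] at hdet
  exact (add_nonneg ha (hH.eigenvalues_nonneg i)).lt_of_ne'
    (Finset.prod_ne_zero_iff.mp hdet.ne' i (Finset.mem_univ i))

theorem PosSemidef.log_det_smul_one_add_le (hH : H.PosSemidef) (ha : 0 ≤ a)
    (hdet : 0 < RCLike.re (a • 1 + H).det) :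
    Real.log (RCLike.re (a • 1 + H).det) ≤ RCLike.re H.trace + Fintype.card n * (a - 1) := by
  have hpos := hH.smul_one_add_eigenvalues_pos ha hdet
  rw [hH.isHermitian.re_det_smul_one_add, hH.isHermitian.re_trace_add_card_mul,
    Real.log_prod fun i _ ↦ (hpos i).ne']
  exact Real.sum_log_le_sum_sub_one fun i _ ↦ hpos i

theorem PosSemidef.log_det_smul_one_add_eq_iff (hH : H.PosSemidef) (ha : 0 ≤ a)
    (hdet : 0 < RCLike.re (a • 1 + H).det) :
    Real.log (RCLike.re (a • 1 + H).det) = RCLike.re H.trace + Fintype.card n * (a - 1) ↔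
      H = (1 - a) • 1 := by
  refine ⟨fun h ↦ hH.isHermitian.eq_smul_one_of_eigenvalues_eq fun i ↦ ?_, ?_⟩
  · have hpos := hH.smul_one_add_eigenvalues_pos ha hdet
    rw [hH.isHermitian.re_det_smul_one_add, hH.isHermitian.re_trace_add_card_mul,
      Real.log_prod fun i _ ↦ (hpos i).ne', Real.sum_log_eq_sum_sub_one_iff fun i _ ↦ hpos i] at h
    linarith [h i (Finset.mem_univ i)]
  · rintro rfl
    simp [← add_smul, RCLike.smul_re]
    ring

theorem mul_conjTranspose_eq_sq_smul_one_iff {u : ℝ} (hu : u ≠ 0) (Q : Matrix n n 𝕜) :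
    Q * Qᴴ = u ^ 2 • 1 ↔ ∃ U ∈ unitaryGroup n 𝕜, Q = u • U := by
  refine ⟨fun h ↦ ⟨u⁻¹ • Q, ?_, by rw [smul_smul, mul_inv_cancel₀ hu, one_smul]⟩, ?_⟩
  · rw [mem_unitaryGroup_iff, star_eq_conjTranspose, conjTranspose_smul, Matrix.smul_mul,
      Matrix.mul_smul, h, smul_smul, smul_smul, star_trivial]
    field_simp
    simp
  · rintro ⟨U, hU, rfl⟩
    rw [conjTranspose_smul, Matrix.smul_mul, Matrix.mul_smul, ← star_eq_conjTranspose,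
      mem_unitaryGroup_iff.mp hU, smul_smul, star_trivial, sq]

end Spectral

end Matrix

theorem det_calQ (z : ℂ) (Q : Matrix (Fin 2) (Fin 2) ℂ) :
    (calQ z Q).det = (Complex.normSq z • 1 + Q * Qᴴ).det := by
  rw [calQ, det_fromBlocks_smul_one, smul_smul, ← Complex.normSq_eq_conj_mul_self,
    Complex.coe_smul]
  simp [sub_eq_add_neg, smul_smul]

variable {z : ℂ} {Q : Matrix (Fin 2) (Fin 2) ℂ}

theorem log_re_det_calQ_le (hdet : 0 < (calQ z Q).det.re) :
    Real.log (calQ z Q).det.re ≤ (Q * Qᴴ).trace.re + 2 * (Complex.normSq z - 1) := by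
  rw [det_calQ] at hdet ⊢
  simpa using (posSemidef_self_mul_conjTranspose Q).log_det_smul_one_add_le
    (Complex.normSq_nonneg z) (by simpa using hdet)

theorem log_re_det_calQ_eq_iff (hdet : 0 < (calQ z Q).det.re) :
    Real.log (calQ z Q).det.re = (Q * Qᴴ).trace.re + 2 * (Complex.normSq z - 1) ↔
      Q * Qᴴ = (1 - Complex.normSq z) • 1 := by
  rw [det_calQ] at hdet ⊢
  simpa using (posSemidef_self_mul_conjTranspose Q).log_det_smul_one_add_eq_iff
    (Complex.normSq_nonneg z) (by simpa using hdet)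

theorem det_calQ_eq_one (hQ : Q * Qᴴ = (1 - Complex.normSq z) • 1) : (calQ z Q).det = 1 := by
  rw [det_calQ, hQ, ← add_smul]
  simp

/-- the saddle-point statement after Lemma 2.2: for `|z| < 1`,
`u = (1 − |z|²)^{1/2}` and `f(Q) = ½(−Tr QQ* + log det 𝒬 + 2u²)`, one has `f(Q) ≤ 0` with
equality exactly on the set `{Q = u·U : U ∈ U(2)}`. -/
theorem stmt_19 (z : ℂ) (hz : ‖z‖ < 1)
    (u : ℝ) (hu : u = Real.sqrt (1 - ‖z‖ ^ 2))
    (f : Matrix (Fin 2) (Fin 2) ℂ → ℝ)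
    (hf : ∀ Q, f Q = (1 / 2) *
      (-(Q * Qᴴ).trace.re + Real.log ((calQ z Q).det).re + 2 * u ^ 2)) :
    (∀ Q : Matrix (Fin 2) (Fin 2) ℂ, 0 < ((calQ z Q).det).re → f Q ≤ 0) ∧
    (∀ Q : Matrix (Fin 2) (Fin 2) ℂ,
      (0 < ((calQ z Q).det).re ∧ f Q = 0) ↔
        ∃ U : Matrix (Fin 2) (Fin 2) ℂ,
          U ∈ Matrix.unitaryGroup (Fin 2) ℂ ∧ Q = (u : ℂ) • U) := by
  have hz2 : 0 < 1 - ‖z‖ ^ 2 := by nlinarith [norm_nonneg z]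
  have hu2 : u ^ 2 = 1 - Complex.normSq z := by rw [hu, Real.sq_sqrt hz2.le, Complex.sq_norm]
  have hu0 : u ≠ 0 := hu ▸ (Real.sqrt_pos.mpr hz2).ne'
  refine ⟨fun Q hdet ↦ ?_, fun Q ↦ ?_⟩
  · rw [hf]
    linarith [log_re_det_calQ_le hdet]
  · simp only [Complex.coe_smul, ← mul_conjTranspose_eq_sq_smul_one_iff hu0, hu2, hf]
    refine ⟨fun ⟨hdet, hfQ⟩ ↦ (log_re_det_calQ_eq_iff hdet).mp (by linarith), fun hQQ ↦ ?_⟩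
    have hdet : 0 < (calQ z Q).det.re := by simp [det_calQ_eq_one hQQ]
    exact ⟨hdet, by linarith [(log_re_det_calQ_eq_iff hdet).mpr hQQ]⟩
end
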